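/- arXiv:math/0407118 — 3 statements merged into one kernel-verified Lean document; each statement's English description precedes it below -/
import Mathlib

section
/- For every even integer i ≥ 2, the moment m_i := Σ_{u=(u₁,u₂) ∈ Z²} u₁^i · p_u satisfies 0 < m_i ≤ Σ_{k=1}^∞ k^i (1−p)^{1+2k(k−1)}(1 − (1−p)^{4k}) < ∞, where p_u is the step distribution defined below. -/
/-!
Away from the origin, `ℤ²` is the disjoint union of the `ℓ¹`-spheres of radii `k ≥ 1`.
The sphere of radius `k` has exactly `4 k` points, each of mass `a_k / (4 k)` with
`a_k = (1-p)^(1+2k(k-1)) (1 - (1-p)^(4k))`, and each with `|u₁| ≤ k`; so it contributes at most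
`k^i a_k` to the moment, while the origin contributes nothing. The resulting series converges
since `a_k ≤ (1-p)^k`, and the moment is positive because already the point `(1, 0)` has
positive mass.
-/

/-- The step distribution of the drainage-network random walk on `ℤ²` with openness
parameter `p`: mass `p` at the origin, and for `u` with `‖u‖₁ = k ≥ 1`, mass
`(1-p)^(#D_{k-1}) (1 - (1-p)^(#δD_k)) / #δD_k`, where `#D_{k-1} = 1 + 2k(k-1)` and
`#δD_k = 4k`. -/
noncomputable def pstep (p : ℝ) (u : ℤ × ℤ) : ℝ :=
  if u.1.natAbs + u.2.natAbs = 0 then p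
  else (1 - p) ^ (1 + 2 * (u.1.natAbs + u.2.natAbs) * (u.1.natAbs + u.2.natAbs - 1)) *
    (1 - (1 - p) ^ (4 * (u.1.natAbs + u.2.natAbs))) / (4 * (u.1.natAbs + u.2.natAbs))

open Function

/-- The point number `t` on the `q`-th side of the `ℓ¹`-sphere of radius `j + 1`, sides being
traversed counterclockwise starting from `(j + 1, 0)`. -/
def l1SpherePoint : (Σ j : ℕ, Fin 4 × Fin (j + 1)) → ℤ × ℤ
  | ⟨j, q, t⟩ =>
    if q = 0 then ((j : ℤ) + 1 - t, t)
    else if q = 1 then (-(t : ℤ), (j : ℤ) + 1 - t)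
    else if q = 2 then (-((j : ℤ) + 1 - t), -(t : ℤ))
    else ((t : ℤ), -((j : ℤ) + 1 - t))

lemma natAbs_add_natAbs_l1SpherePoint (x : Σ j : ℕ, Fin 4 × Fin (j + 1)) :
    (l1SpherePoint x).1.natAbs + (l1SpherePoint x).2.natAbs = x.1 + 1 := by
  obtain ⟨j, q, t, ht⟩ := x
  simp only [l1SpherePoint]
  split_ifs <;> omega

lemma l1SpherePoint_injective : Injective l1SpherePoint := by
  intro x y h
  have hj : x.1 = y.1 := by
    simpa [h, natAbs_add_natAbs_l1SpherePoint] using (natAbs_add_natAbs_l1SpherePoint x).symm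
  obtain ⟨j, ⟨q, hq⟩, t, ht⟩ := x
  obtain ⟨j', ⟨q', hq'⟩, t', ht'⟩ := y
  obtain rfl : j = j' := hj
  simp only [l1SpherePoint, Fin.ext_iff] at h
  split_ifs at h <;> simp only [Prod.mk.injEq] at h <;>
    simp only [Sigma.mk.injEq, heq_eq_eq, Prod.mk.injEq, Fin.mk.injEq, true_and] <;> omega

lemma range_l1SpherePoint : Set.range l1SpherePoint = {0}ᶜ := by
  ext ⟨a, b⟩
  refine ⟨?_, fun hab => ?_⟩
  · rintro ⟨x, hx⟩ h
    have := natAbs_add_natAbs_l1SpherePoint x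
    simp_all
  · have hab : ¬(a = 0 ∧ b = 0) := by simpa [Prod.ext_iff] using hab
    have hquadrant : (0 < a ∧ 0 ≤ b) ∨ (a ≤ 0 ∧ 0 < b) ∨ (a < 0 ∧ b ≤ 0) ∨
        (0 ≤ a ∧ b < 0) := by omega
    rcases hquadrant with h | h | h | h <;>
      [refine ⟨⟨a.natAbs + b.natAbs - 1, 0, b.natAbs, by omega⟩, ?_⟩;
       refine ⟨⟨a.natAbs + b.natAbs - 1, 1, a.natAbs, by omega⟩, ?_⟩;
       refine ⟨⟨a.natAbs + b.natAbs - 1, 2, b.natAbs, by omega⟩, ?_⟩;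
       refine ⟨⟨a.natAbs + b.natAbs - 1, 3, a.natAbs, by omega⟩, ?_⟩] <;>
      simp only [l1SpherePoint, Fin.isValue, Fin.reduceEq, ↓reduceIte, Prod.mk.injEq] <;> omega

theorem summable_and_tsum_le_of_injective_sigma {α β : Type*} {γ : β → Type*}
    [∀ j, Fintype (γ j)] {e : (Σ j, γ j) → α} (he : Injective e) {g : α → ℝ}
    (hg : ∀ a, 0 ≤ g a) (hg_range : ∀ a ∉ Set.range e, g a = 0)
    {f : β → ℝ} (hf : Summable f)
    (hfiber : ∀ j, ∑ c, g (e ⟨j, c⟩) ≤ f j) :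
    Summable g ∧ ∑' a, g a ≤ ∑' j, f j := by
  have hfiber' (j : β) : ∑' c, g (e ⟨j, c⟩) ≤ f j := (tsum_fintype _).trans_le (hfiber j)
  have hsigma : Summable fun x => g (e x) :=
    (summable_sigma_of_nonneg fun x => hg _).2 ⟨fun _ => .of_finite,
      hf.of_nonneg_of_le (fun _ => tsum_nonneg fun _ => hg _) hfiber'⟩
  refine ⟨(he.summable_iff hg_range).1 hsigma, ?_⟩
  rw [← he.tsum_eq fun a ha => by_contra fun h => ha (hg_range a h), hsigma.tsum_sigma]
  exact hsigma.sigma.tsum_le_tsum hfiber' hf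

lemma pstep_of_natAbs_add_natAbs_eq_succ (p : ℝ) {u : ℤ × ℤ} {j : ℕ}
    (hu : u.1.natAbs + u.2.natAbs = j + 1) :
    pstep p u = (1 - p) ^ (1 + 2 * (j + 1) * j) * (1 - (1 - p) ^ (4 * (j + 1))) /
      (4 * (j + 1)) := by
  have hu' : (u.1.natAbs : ℝ) + u.2.natAbs = j + 1 := by exact_mod_cast hu
  rw [pstep, if_neg (by omega), hu, hu', Nat.add_sub_cancel]

lemma pstep_pos {p : ℝ} (hp0 : 0 < p) (hp1 : p < 1) (u : ℤ × ℤ) : 0 < pstep p u := by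
  unfold pstep
  split_ifs with h
  · exact hp0
  · have hq : 0 < 1 - p := by linarith
    have hq4 : (1 - p) ^ (4 * (u.1.natAbs + u.2.natAbs)) < 1 :=
      pow_lt_one₀ hq.le (by linarith) (by omega)
    have : (0 : ℝ) < u.1.natAbs + u.2.natAbs := by exact_mod_cast Nat.pos_of_ne_zero h
    have : 0 < 1 - (1 - p) ^ (4 * (u.1.natAbs + u.2.natAbs)) := by linarith
    positivity

/-- `k^i a_k` for `k = j + 1`: the bound on the contribution of the `ℓ¹`-sphere of radius `k`
to the `i`-th moment. -/
def shellMoment (p : ℝ) (i j : ℕ) : ℝ :=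
  ((j : ℝ) + 1) ^ i * (1 - p) ^ (1 + 2 * (j + 1) * j) * (1 - (1 - p) ^ (4 * (j + 1)))

lemma summable_shellMoment {p : ℝ} (hp0 : 0 < p) (hp1 : p ≤ 1) (i : ℕ) :
    Summable (shellMoment p i) := by
  have hq : 0 ≤ 1 - p := by linarith
  have hgeom : Summable fun n : ℕ => (n : ℝ) ^ i * (1 - p) ^ n :=
    summable_pow_mul_geometric_of_norm_lt_one i (by rw [Real.norm_of_nonneg hq]; linarith)
  refine ((summable_nat_add_iff 1).2 hgeom).of_nonneg_of_le (fun j => ?_) (fun j => ?_)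
  · have : (1 - p) ^ (4 * (j + 1)) ≤ 1 := pow_le_one₀ hq (by linarith)
    have : 0 ≤ 1 - (1 - p) ^ (4 * (j + 1)) := by linarith
    unfold shellMoment; positivity
  · have hexp : (1 - p) ^ (1 + 2 * (j + 1) * j) ≤ (1 - p) ^ (j + 1) :=
      pow_le_pow_of_le_one hq (by linarith) (by nlinarith)
    have : 0 ≤ (1 - p) ^ (4 * (j + 1)) := by positivity
    push_cast
    unfold shellMoment
    calc _ ≤ ((j : ℝ) + 1) ^ i * (1 - p) ^ (1 + 2 * (j + 1) * j) * 1 := by gcongr; linarith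
      _ ≤ _ := by rw [mul_one]; gcongr

lemma pow_mul_pstep_le_shellMoment {p : ℝ} (hp0 : 0 ≤ p) (hp1 : p ≤ 1) {i : ℕ} (hi : Even i)
    {u : ℤ × ℤ} {j : ℕ} (hu : u.1.natAbs + u.2.natAbs = j + 1) :
    (u.1 : ℝ) ^ i * pstep p u ≤ shellMoment p i j / (4 * (j + 1)) := by
  have habs : |(u.1 : ℝ)| ≤ j + 1 := by
    rw [← Int.cast_abs, Int.abs_eq_natAbs]; exact_mod_cast (by omega : u.1.natAbs ≤ j + 1)
  have hq : 0 ≤ 1 - p := by linarith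
  have : (1 - p) ^ (4 * (j + 1)) ≤ 1 := pow_le_one₀ hq (by linarith)
  have : 0 ≤ 1 - (1 - p) ^ (4 * (j + 1)) := by linarith
  have hshell : shellMoment p i j / (4 * (j + 1)) = ((j : ℝ) + 1) ^ i *
      ((1 - p) ^ (1 + 2 * (j + 1) * j) * (1 - (1 - p) ^ (4 * (j + 1))) / (4 * (j + 1))) := by
    unfold shellMoment; ring
  rw [pstep_of_natAbs_add_natAbs_eq_succ p hu, ← hi.pow_abs, hshell]
  gcongr

lemma sum_l1SpherePoint_le_shellMoment {p : ℝ} (hp0 : 0 ≤ p) (hp1 : p ≤ 1) {i : ℕ}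
    (hi : Even i) (j : ℕ) :
    ∑ c, ((l1SpherePoint ⟨j, c⟩).1 : ℝ) ^ i * pstep p (l1SpherePoint ⟨j, c⟩) ≤
      shellMoment p i j :=
  calc _ ≤ ∑ _c : Fin 4 × Fin (j + 1), shellMoment p i j / (4 * (j + 1)) :=
        Finset.sum_le_sum fun c _ => pow_mul_pstep_le_shellMoment hp0 hp1 hi
          (natAbs_add_natAbs_l1SpherePoint ⟨j, c⟩)
    _ = shellMoment p i j := by
        rw [Finset.sum_const, Finset.card_univ, Fintype.card_prod, Fintype.card_fin,
          Fintype.card_fin, nsmul_eq_mul]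
        push_cast
        field_simp

/-- For every even integer `i ≥ 2`, the moment
`m_i = Σ_{u ∈ ℤ²} u₁^i p_u` satisfies
`0 < m_i ≤ Σ_{k=1}^∞ k^i (1-p)^(1+2k(k-1)) (1 - (1-p)^(4k)) < ∞`.
The sum over `k ≥ 1` is written as a sum over `k = j + 1`, `j ∈ ℕ`, and its
finiteness as summability of the corresponding series. -/
theorem moments_of_step_distribution (p : ℝ) (hp0 : 0 < p) (hp1 : p < 1)
    (i : ℕ) (hi : 2 ≤ i) (hieven : Even i) :
    Summable (fun j : ℕ => ((j : ℝ) + 1) ^ i * (1 - p) ^ (1 + 2 * (j + 1) * j) *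
      (1 - (1 - p) ^ (4 * (j + 1)))) ∧
    0 < ∑' u : ℤ × ℤ, (u.1 : ℝ) ^ i * pstep p u ∧
    ∑' u : ℤ × ℤ, (u.1 : ℝ) ^ i * pstep p u ≤
      ∑' j : ℕ, ((j : ℝ) + 1) ^ i * (1 - p) ^ (1 + 2 * (j + 1) * j) *
        (1 - (1 - p) ^ (4 * (j + 1))) := by
  have hmoment_nonneg (u : ℤ × ℤ) : 0 ≤ (u.1 : ℝ) ^ i * pstep p u :=
    mul_nonneg (hieven.pow_nonneg _) (pstep_pos hp0 hp1 u).le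
  have hmoment_origin : ∀ u ∉ Set.range l1SpherePoint, (u.1 : ℝ) ^ i * pstep p u = 0 := by
    intro u hu
    rw [range_l1SpherePoint, Set.notMem_compl_iff, Set.mem_singleton_iff] at hu
    simp [hu, zero_pow (by omega : i ≠ 0)]
  obtain ⟨hsummable, hle⟩ := summable_and_tsum_le_of_injective_sigma l1SpherePoint_injective
    hmoment_nonneg hmoment_origin (summable_shellMoment hp0 hp1.le i)
    (sum_l1SpherePoint_le_shellMoment hp0.le hp1.le hieven)
  refine ⟨summable_shellMoment hp0 hp1.le i, hsummable.tsum_pos hmoment_nonneg (1, 0) ?_, hle⟩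
  simpa using pstep_pos hp0 hp1 (1, 0)
end

section
/- Let m₂(k) := Σ_{u=(u₁,u₂) ∈ D_k} u₁² · p_u and m₂ := Σ_{u=(u₁,u₂) ∈ Z²} u₁² · p_u, where p_u is the step distribution defined below. Then k² · (m₂ − m₂(k)) → 0 as k → ∞; more precisely, k²(m₂ − m₂(k)) ≤ Σ_{j=k+1}^∞ j⁴ (1−p)^{1+2j(j−1)}, and this tail of a convergent series tends to 0 as k → ∞. -/
open Filter

/-- The discrete `ℓ¹`-diamond `D_k = {u ∈ ℤ² : ‖u‖₁ ≤ k}`, as a finite set. -/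
noncomputable def diamond (k : ℕ) : Finset (ℤ × ℤ) :=
  (Finset.Icc (-(k : ℤ)) (k : ℤ) ×ˢ Finset.Icc (-(k : ℤ)) (k : ℤ)).filter
    fun u => u.1.natAbs + u.2.natAbs ≤ k

/-- the truncated second moment `m₂(k) = Σ_{u ∈ D_k} u₁² p_u` -/
noncomputable def m2trunc (p : ℝ) (k : ℕ) : ℝ := ∑ u ∈ diamond k, (u.1 : ℝ) ^ 2 * pstep p u

/-- the second moment `m₂ = Σ_{u ∈ ℤ²} u₁² p_u` -/
noncomputable def m2 (p : ℝ) : ℝ := ∑' u : ℤ × ℤ, (u.1 : ℝ) ^ 2 * pstep p u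

lemma mem_diamond {k : ℕ} {u : ℤ × ℤ} : u ∈ diamond k ↔ u.1.natAbs + u.2.natAbs ≤ k := by
  simp only [diamond, Finset.mem_filter, Finset.mem_product, Finset.mem_Icc]
  omega

noncomputable def sphere' (j : ℕ) : Finset (ℤ × ℤ) := (diamond j).filter fun u => u.1.natAbs + u.2.natAbs = j

lemma mem_sphere' {j : ℕ} {u : ℤ × ℤ} : u ∈ sphere' j ↔ u.1.natAbs + u.2.natAbs = j := by
  simp only [sphere', Finset.mem_filter, mem_diamond]
  omega

lemma sphere'_card_le {j : ℕ} (hj : 1 ≤ j) : (sphere' j).card ≤ 4 * j := by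
  classical
  have h := Finset.card_le_card_of_injOn
    (f := fun u : ℤ × ℤ => if 0 < u.1 ∧ 0 ≤ u.2 then u.2.natAbs else if 0 < u.2 then
      j + u.1.natAbs else if u.1 < 0 then 2 * j + u.2.natAbs else 3 * j + u.1.natAbs)
    (s := sphere' j) (t := Finset.range (4 * j)) ?_ ?_
  · simpa using h
  · intro u hu
    rw [Finset.mem_coe, mem_sphere'] at hu
    rw [Finset.mem_coe, Finset.mem_range]
    beta_reduce
    split_ifs <;> omega
  · intro u hu v hv h
    simp only [Finset.mem_coe, mem_sphere'] at hu hv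
    obtain ⟨a, b⟩ := u
    obtain ⟨c, d⟩ := v
    simp only [Prod.mk.injEq] at h ⊢
    split_ifs at h <;> omega

lemma pstep_nonneg {p : ℝ} (hp0 : 0 < p) (hp1 : p < 1) (u : ℤ × ℤ) : 0 ≤ pstep p u := by
  unfold pstep
  split_ifs
  · exact hp0.le
  · apply div_nonneg _ (by positivity)
    apply mul_nonneg (pow_nonneg (by linarith) _)
    have h1 : (1 - p) ^ (4 * (u.1.natAbs + u.2.natAbs)) ≤ 1 :=
      pow_le_one₀ (by linarith) (by linarith)
    linarith

lemma term_bound {p : ℝ} (hp0 : 0 < p) (hp1 : p < 1) {j : ℕ} (hj : 1 ≤ j) {u : ℤ × ℤ}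
    (hu : u.1.natAbs + u.2.natAbs = j) :
    (u.1 : ℝ) ^ 2 * pstep p u ≤ (j : ℝ) ^ 2 * (1 - p) ^ (1 + 2 * j * (j - 1)) / (4 * j) := by
  have h1 : (u.1 : ℝ) ^ 2 ≤ (j : ℝ) ^ 2 := by
    have ha : u.1 ≤ (j : ℤ) := by omega
    have hb : -(j : ℤ) ≤ u.1 := by omega
    exact sq_le_sq' (by exact_mod_cast hb) (by exact_mod_cast ha)
  have hq0 : (0:ℝ) ≤ 1 - p := by linarith
  unfold pstep
  rw [hu, if_neg (by omega),
    show ((u.1.natAbs : ℝ) + u.2.natAbs) = (j : ℝ) from by exact_mod_cast hu]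
  have hA : (0:ℝ) ≤ (1 - p) ^ (1 + 2 * j * (j - 1)) := pow_nonneg hq0 _
  have hB0 : (0:ℝ) ≤ 1 - (1 - p) ^ (4 * j) := by
    have := pow_le_one₀ hq0 (by linarith : (1:ℝ) - p ≤ 1) (n := 4 * j); linarith
  have hB1 : 1 - (1 - p) ^ (4 * j) ≤ 1 := by
    have := pow_nonneg hq0 (4 * j); linarith
  have hj' : (0:ℝ) < 4 * (j:ℝ) := by positivity
  calc (u.1 : ℝ) ^ 2 * ((1 - p) ^ (1 + 2 * j * (j - 1)) * (1 - (1 - p) ^ (4 * j)) / (4 * j))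
      ≤ (j : ℝ) ^ 2 * ((1 - p) ^ (1 + 2 * j * (j - 1)) * 1 / (4 * j)) := by
        apply mul_le_mul h1 _ _ (by positivity)
        · apply div_le_div_of_nonneg_right ?_ hj'.le |>.trans_eq rfl
          exact mul_le_mul_of_nonneg_left hB1 hA
        · positivity
    _ = (j : ℝ) ^ 2 * (1 - p) ^ (1 + 2 * j * (j - 1)) / (4 * j) := by ring

lemma sphere'_sum_le {p : ℝ} (hp0 : 0 < p) (hp1 : p < 1) {j : ℕ} (hj : 1 ≤ j) :
    ∑ u ∈ sphere' j, (u.1 : ℝ) ^ 2 * pstep p u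
      ≤ (j : ℝ) ^ 2 * (1 - p) ^ (1 + 2 * j * (j - 1)) := by
  have hq0 : (0:ℝ) ≤ 1 - p := by linarith
  have hb : (0:ℝ) ≤ (j : ℝ) ^ 2 * (1 - p) ^ (1 + 2 * j * (j - 1)) / (4 * j) := by positivity
  calc ∑ u ∈ sphere' j, (u.1 : ℝ) ^ 2 * pstep p u
      ≤ ∑ _u ∈ sphere' j, (j : ℝ) ^ 2 * (1 - p) ^ (1 + 2 * j * (j - 1)) / (4 * j) :=
        Finset.sum_le_sum fun u hu => term_bound hp0 hp1 hj (mem_sphere'.mp hu)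
    _ = (sphere' j).card * ((j : ℝ) ^ 2 * (1 - p) ^ (1 + 2 * j * (j - 1)) / (4 * j)) := by
        rw [Finset.sum_const, nsmul_eq_mul]
    _ ≤ (4 * j : ℕ) * ((j : ℝ) ^ 2 * (1 - p) ^ (1 + 2 * j * (j - 1)) / (4 * j)) := by
        apply mul_le_mul_of_nonneg_right _ hb
        exact_mod_cast sphere'_card_le hj
    _ = (j : ℝ) ^ 2 * (1 - p) ^ (1 + 2 * j * (j - 1)) := by
        have : (j : ℝ) ≠ 0 := by positivity
        push_cast
        field_simp

lemma annulus_sum_le {p : ℝ} (hp0 : 0 < p) (hp1 : p < 1) {k N : ℕ} (h : k ≤ N) :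
    ∑ u ∈ diamond N \ diamond k, (u.1 : ℝ) ^ 2 * pstep p u
      ≤ ∑ j ∈ Finset.Icc (k + 1) N, (j : ℝ) ^ 2 * (1 - p) ^ (1 + 2 * j * (j - 1)) := by
  classical
  have hdecomp : diamond N \ diamond k = (Finset.Icc (k + 1) N).biUnion sphere' := by
    ext u
    simp only [Finset.mem_sdiff, mem_diamond, Finset.mem_biUnion, Finset.mem_Icc, mem_sphere',
      not_le]
    constructor
    · intro h'
      exact ⟨u.1.natAbs + u.2.natAbs, ⟨by omega, by omega⟩, rfl⟩
    · rintro ⟨j, ⟨hj1, hj2⟩, hj3⟩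
      omega
  rw [hdecomp, Finset.sum_biUnion]
  · exact Finset.sum_le_sum fun j hj =>
      sphere'_sum_le hp0 hp1 (by simp only [Finset.mem_Icc] at hj; omega)
  · intro i _ j _ hij
    rw [Function.onFun, Finset.disjoint_left]
    intro a hai haj
    rw [mem_sphere'] at hai haj
    omega

noncomputable def Gfun (p : ℝ) (m : ℕ) (j : ℕ) : ℝ := (j : ℝ) ^ m * (1 - p) ^ (1 + 2 * j * (j - 1))

lemma Gfun_nonneg {p : ℝ} (hp1 : p < 1) (m j : ℕ) : 0 ≤ Gfun p m j := by
  unfold Gfun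
  have : (0:ℝ) ≤ 1 - p := by linarith
  positivity

lemma summable_Gfun {p : ℝ} (hp0 : 0 < p) (hp1 : p < 1) (m : ℕ) : Summable (Gfun p m) := by
  have hq0 : (0:ℝ) ≤ 1 - p := by linarith
  have hq1 : (1:ℝ) - p < 1 := by linarith
  apply Summable.of_nonneg_of_le (Gfun_nonneg hp1 m) (f := fun j : ℕ => (j : ℝ) ^ m * (1 - p) ^ j)
  · intro j
    unfold Gfun
    apply mul_le_mul_of_nonneg_left _ (by positivity)
    apply pow_le_pow_of_le_one hq0 (by linarith)
    rcases j with _ | j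
    · omega
    · have hj : (j + 1) - 1 = j := rfl
      rw [hj]
      nlinarith
  · apply summable_pow_mul_geometric_of_norm_lt_one
    rw [Real.norm_eq_abs, abs_lt]
    constructor <;> linarith

lemma summable_a {p : ℝ} (hp0 : 0 < p) (hp1 : p < 1) :
    Summable (fun u : ℤ × ℤ => (u.1 : ℝ) ^ 2 * pstep p u) := by
  have hnn : ∀ u : ℤ × ℤ, 0 ≤ (u.1 : ℝ) ^ 2 * pstep p u := fun u =>
    mul_nonneg (by positivity) (pstep_nonneg hp0 hp1 u)
  apply summable_of_sum_le (c := ∑' j, Gfun p 2 j) hnn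
  intro s
  set N := s.sup (fun u : ℤ × ℤ => u.1.natAbs + u.2.natAbs) with hN
  have hsub : s ⊆ diamond N := fun u hu => mem_diamond.mpr
    (Finset.le_sup (f := fun u : ℤ × ℤ => u.1.natAbs + u.2.natAbs) hu)
  have hsub0 : diamond 0 ⊆ diamond N := fun u hu => by
    rw [mem_diamond] at hu ⊢; omega
  calc ∑ u ∈ s, (u.1 : ℝ) ^ 2 * pstep p u
      ≤ ∑ u ∈ diamond N, (u.1 : ℝ) ^ 2 * pstep p u :=
        Finset.sum_le_sum_of_subset_of_nonneg hsub fun u _ _ => hnn u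
    _ = ∑ u ∈ diamond N \ diamond 0, (u.1 : ℝ) ^ 2 * pstep p u
        + ∑ u ∈ diamond 0, (u.1 : ℝ) ^ 2 * pstep p u := (Finset.sum_sdiff hsub0).symm
    _ = ∑ u ∈ diamond N \ diamond 0, (u.1 : ℝ) ^ 2 * pstep p u := by
        have hz : ∑ u ∈ diamond 0, (u.1 : ℝ) ^ 2 * pstep p u = 0 := by
          apply Finset.sum_eq_zero
          intro u hu
          rw [mem_diamond] at hu
          have h0 : u.1 = 0 := by omega
          rw [h0]
          norm_num
        rw [hz, add_zero]
    _ ≤ ∑ j ∈ Finset.Icc 1 N, (j : ℝ) ^ 2 * (1 - p) ^ (1 + 2 * j * (j - 1)) :=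
        annulus_sum_le hp0 hp1 (Nat.zero_le N)
    _ ≤ ∑' j, Gfun p 2 j :=
        Summable.sum_le_tsum _ (fun j _ => Gfun_nonneg hp1 2 j) (summable_Gfun hp0 hp1 2)

lemma m2_sub {p : ℝ} (hp0 : 0 < p) (hp1 : p < 1) (k : ℕ) :
    m2 p - m2trunc p k = ∑' u : ℤ × ℤ,
      (if u.1.natAbs + u.2.natAbs ≤ k then 0 else (u.1 : ℝ) ^ 2 * pstep p u) := by
  classical
  have hnn : ∀ u : ℤ × ℤ, 0 ≤ (u.1 : ℝ) ^ 2 * pstep p u := fun u =>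
    mul_nonneg (by positivity) (pstep_nonneg hp0 hp1 u)
  have hsum := summable_a hp0 hp1
  have hf : Summable (fun u : ℤ × ℤ =>
      if u.1.natAbs + u.2.natAbs ≤ k then 0 else (u.1 : ℝ) ^ 2 * pstep p u) := by
    apply Summable.of_nonneg_of_le _ _ hsum
    · intro u; split_ifs <;> first | exact le_refl _ | exact hnn u
    · intro u; split_ifs <;> first | exact le_refl _ | exact hnn u
  have hg : Summable (fun u : ℤ × ℤ =>
      if u.1.natAbs + u.2.natAbs ≤ k then (u.1 : ℝ) ^ 2 * pstep p u else 0) := by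
    apply Summable.of_nonneg_of_le _ _ hsum
    · intro u; split_ifs <;> first | exact le_refl _ | exact hnn u
    · intro u; split_ifs <;> first | exact le_refl _ | exact hnn u
  have hsplit : ∀ u : ℤ × ℤ, (u.1 : ℝ) ^ 2 * pstep p u =
      (if u.1.natAbs + u.2.natAbs ≤ k then (u.1 : ℝ) ^ 2 * pstep p u else 0)
      + (if u.1.natAbs + u.2.natAbs ≤ k then 0 else (u.1 : ℝ) ^ 2 * pstep p u) := by
    intro u; split_ifs <;> simp
  have h1 : m2 p = ∑ u ∈ diamond k, (u.1 : ℝ) ^ 2 * pstep p u + ∑' u : ℤ × ℤ,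
      (if u.1.natAbs + u.2.natAbs ≤ k then 0 else (u.1 : ℝ) ^ 2 * pstep p u) := by
    rw [m2, tsum_congr hsplit, Summable.tsum_add hg hf]
    congr 1
    rw [tsum_eq_sum (s := diamond k)]
    · exact Finset.sum_congr rfl fun u hu => if_pos (mem_diamond.mp hu)
    · intro u hu
      exact if_neg (fun hle => hu (mem_diamond.mpr hle))
  rw [h1, m2trunc]
  ring

lemma sum_Icc_shift (k N : ℕ) (f : ℕ → ℝ) :
    ∑ j ∈ Finset.Icc (k + 1) N, f j = ∑ i ∈ Finset.range (N - k), f (k + 1 + i) := by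
  rw [show Finset.Icc (k + 1) N = Finset.image (fun i => k + 1 + i) (Finset.range (N - k)) from ?_]
  · rw [Finset.sum_image]
    intro a _ b _ h
    simp only at h
    omega
  · ext x
    simp only [Finset.mem_Icc, Finset.mem_image, Finset.mem_range]
    constructor
    · intro ⟨h1, h2⟩
      exact ⟨x - (k + 1), by omega, by omega⟩
    · rintro ⟨i, hi, rfl⟩
      omega

lemma key_bound {p : ℝ} (hp0 : 0 < p) (hp1 : p < 1) {k : ℕ} (hk : 1 ≤ k) :
    (k : ℝ) ^ 2 * (m2 p - m2trunc p k) ≤ ∑' i : ℕ, Gfun p 4 (k + 1 + i) := by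
  classical
  have hq0 : (0:ℝ) ≤ 1 - p := by linarith
  have hnn : ∀ u : ℤ × ℤ, 0 ≤ (u.1 : ℝ) ^ 2 * pstep p u := fun u =>
    mul_nonneg (by positivity) (pstep_nonneg hp0 hp1 u)
  have hG4 : Summable (fun i : ℕ => Gfun p 4 (k + 1 + i)) :=
    ((summable_Gfun hp0 hp1 4).comp_injective (add_right_injective (k + 1))).congr fun i => rfl
  have hfk : Summable (fun u : ℤ × ℤ =>
      if u.1.natAbs + u.2.natAbs ≤ k then 0 else (u.1 : ℝ) ^ 2 * pstep p u) := by
    apply Summable.of_nonneg_of_le _ _ (summable_a hp0 hp1)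
    · intro u; split_ifs <;> first | exact le_refl _ | exact hnn u
    · intro u; split_ifs <;> first | exact le_refl _ | exact hnn u
  rw [m2_sub hp0 hp1 k, ← tsum_mul_left]
  apply Summable.tsum_le_of_sum_le (hfk.mul_left _)
  intro s
  rw [← Finset.mul_sum]
  set t := s.filter (fun u : ℤ × ℤ => k < u.1.natAbs + u.2.natAbs) with ht
  set N := k + s.sup (fun u : ℤ × ℤ => u.1.natAbs + u.2.natAbs) with hNdef
  have h1 : ∑ u ∈ s, (if u.1.natAbs + u.2.natAbs ≤ k then 0 else (u.1 : ℝ) ^ 2 * pstep p u)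
      = ∑ u ∈ t, (if u.1.natAbs + u.2.natAbs ≤ k then 0 else (u.1 : ℝ) ^ 2 * pstep p u) :=
    (Finset.sum_filter_of_ne fun u _ hne => by
      by_contra hc
      push_neg at hc
      exact hne (if_pos hc)).symm
  have h2 : ∑ u ∈ t, (if u.1.natAbs + u.2.natAbs ≤ k then 0 else (u.1 : ℝ) ^ 2 * pstep p u)
      = ∑ u ∈ t, (u.1 : ℝ) ^ 2 * pstep p u := by
    apply Finset.sum_congr rfl
    intro u hu
    rw [ht, Finset.mem_filter] at hu
    exact if_neg (by omega)
  have h3 : t ⊆ diamond N \ diamond k := by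
    intro u hu
    rw [ht, Finset.mem_filter] at hu
    have hle : u.1.natAbs + u.2.natAbs ≤ s.sup (fun u : ℤ × ℤ => u.1.natAbs + u.2.natAbs) :=
      Finset.le_sup (f := fun u : ℤ × ℤ => u.1.natAbs + u.2.natAbs) hu.1
    rw [Finset.mem_sdiff, mem_diamond, mem_diamond]
    constructor
    · omega
    · omega
  calc (k : ℝ) ^ 2 * ∑ u ∈ s, (if u.1.natAbs + u.2.natAbs ≤ k then 0
          else (u.1 : ℝ) ^ 2 * pstep p u)
      = (k : ℝ) ^ 2 * ∑ u ∈ t, (u.1 : ℝ) ^ 2 * pstep p u := by rw [h1, h2]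
    _ ≤ (k : ℝ) ^ 2 * ∑ u ∈ diamond N \ diamond k, (u.1 : ℝ) ^ 2 * pstep p u := by
        apply mul_le_mul_of_nonneg_left _ (by positivity)
        exact Finset.sum_le_sum_of_subset_of_nonneg h3 fun u _ _ => hnn u
    _ ≤ (k : ℝ) ^ 2 * ∑ j ∈ Finset.Icc (k + 1) N, (j : ℝ) ^ 2 * (1 - p) ^ (1 + 2 * j * (j - 1)) :=
        mul_le_mul_of_nonneg_left (annulus_sum_le hp0 hp1 (by omega)) (by positivity)
    _ = ∑ j ∈ Finset.Icc (k + 1) N, (k : ℝ) ^ 2 * ((j : ℝ) ^ 2 * (1 - p) ^ (1 + 2 * j * (j - 1)))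
        := Finset.mul_sum _ _ _
    _ ≤ ∑ j ∈ Finset.Icc (k + 1) N, Gfun p 4 j := by
        apply Finset.sum_le_sum
        intro j hj
        rw [Finset.mem_Icc] at hj
        have hkj : (k : ℝ) ≤ (j : ℝ) := by exact_mod_cast (by omega : k ≤ j)
        have hk2 : (k : ℝ) ^ 2 ≤ (j : ℝ) ^ 2 := pow_le_pow_left₀ (by positivity) hkj 2
        have hqe : (0:ℝ) ≤ (1 - p) ^ (1 + 2 * j * (j - 1)) := pow_nonneg hq0 _
        unfold Gfun
        calc (k : ℝ) ^ 2 * ((j : ℝ) ^ 2 * (1 - p) ^ (1 + 2 * j * (j - 1)))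
            ≤ (j : ℝ) ^ 2 * ((j : ℝ) ^ 2 * (1 - p) ^ (1 + 2 * j * (j - 1))) :=
              mul_le_mul_of_nonneg_right hk2 (by positivity)
          _ = (j : ℝ) ^ 4 * (1 - p) ^ (1 + 2 * j * (j - 1)) := by ring
    _ = ∑ i ∈ Finset.range (N - k), Gfun p 4 (k + 1 + i) := sum_Icc_shift k N _
    _ ≤ ∑' i : ℕ, Gfun p 4 (k + 1 + i) :=
        Summable.sum_le_tsum _ (fun i _ => Gfun_nonneg hp1 4 _) hG4


/-- `k² (m₂ - m₂(k)) → 0` as `k → ∞`; more precisely,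
`k² (m₂ - m₂(k)) ≤ Σ_{j=k+1}^∞ j⁴ (1-p)^(1+2j(j-1))` (the sum over `j ≥ k + 1`
being written as a sum over `j = k + 1 + i`, `i ∈ ℕ`), and this tail of a
convergent series tends to `0` as `k → ∞`. -/
theorem second_moment_truncation (p : ℝ) (hp0 : 0 < p) (hp1 : p < 1) :
    (∀ k : ℕ, 1 ≤ k → (k : ℝ) ^ 2 * (m2 p - m2trunc p k) ≤
      ∑' i : ℕ, ((k : ℝ) + 1 + i) ^ 4 * (1 - p) ^ (1 + 2 * (k + 1 + i) * (k + i))) ∧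
    Summable (fun j : ℕ => (j : ℝ) ^ 4 * (1 - p) ^ (1 + 2 * j * (j - 1))) ∧
    Tendsto (fun k : ℕ =>
      ∑' i : ℕ, ((k : ℝ) + 1 + i) ^ 4 * (1 - p) ^ (1 + 2 * (k + 1 + i) * (k + i)))
      atTop (nhds 0) ∧
    Tendsto (fun k : ℕ => (k : ℝ) ^ 2 * (m2 p - m2trunc p k)) atTop (nhds 0) := by

  have hG4 := summable_Gfun hp0 hp1 4
  have hgk_eq : ∀ k : ℕ,
      (fun i : ℕ => ((k : ℝ) + 1 + i) ^ 4 * (1 - p) ^ (1 + 2 * (k + 1 + i) * (k + i)))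
      = fun i : ℕ => Gfun p 4 (k + 1 + i) := by
    intro k
    funext i
    unfold Gfun
    have h1 : (k + 1 + i) - 1 = k + i := by omega
    rw [h1]
    push_cast
    ring
  have b1 : ∀ k : ℕ, 1 ≤ k → (k : ℝ) ^ 2 * (m2 p - m2trunc p k) ≤
      ∑' i : ℕ, ((k : ℝ) + 1 + i) ^ 4 * (1 - p) ^ (1 + 2 * (k + 1 + i) * (k + i)) := by
    intro k hk
    have h := key_bound hp0 hp1 hk
    rwa [hgk_eq k]
  have b2 : Summable (fun j : ℕ => (j : ℝ) ^ 4 * (1 - p) ^ (1 + 2 * j * (j - 1))) := hG4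
  have hT : ∀ k : ℕ, (∑' i : ℕ, Gfun p 4 (k + 1 + i))
      = (∑' j, Gfun p 4 j) - ∑ j ∈ Finset.range (k + 1), Gfun p 4 j := by
    intro k
    have h := Summable.sum_add_tsum_nat_add (f := Gfun p 4) (k + 1) hG4
    have h2 : ∑' i : ℕ, Gfun p 4 (i + (k + 1)) = ∑' i : ℕ, Gfun p 4 (k + 1 + i) :=
      tsum_congr fun i => by rw [Nat.add_comm]
    rw [h2] at h
    linarith
  have b3 : Tendsto (fun k : ℕ =>
      ∑' i : ℕ, ((k : ℝ) + 1 + i) ^ 4 * (1 - p) ^ (1 + 2 * (k + 1 + i) * (k + i)))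
      atTop (nhds 0) := by
    have hS : Tendsto (fun n : ℕ => ∑ j ∈ Finset.range n, Gfun p 4 j) atTop
        (nhds (∑' j, Gfun p 4 j)) := hG4.hasSum.tendsto_sum_nat
    have hS1 : Tendsto (fun k : ℕ =>
        (∑' j, Gfun p 4 j) - ∑ j ∈ Finset.range (k + 1), Gfun p 4 j) atTop (nhds 0) := by
      have h := Tendsto.sub (tendsto_const_nhds (x := ∑' j, Gfun p 4 j) (f := atTop))
        (hS.comp (tendsto_add_atTop_nat 1))
      simpa using h
    apply hS1.congr
    intro k
    rw [hgk_eq k]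
    exact (hT k).symm
  have hlb : ∀ k : ℕ, 0 ≤ (k : ℝ) ^ 2 * (m2 p - m2trunc p k) := by
    intro k
    rw [m2_sub hp0 hp1 k]
    apply mul_nonneg (by positivity)
    apply tsum_nonneg
    intro u
    split_ifs
    · exact le_refl 0
    · exact mul_nonneg (by positivity) (pstep_nonneg hp0 hp1 u)
  have b4 : Tendsto (fun k : ℕ => (k : ℝ) ^ 2 * (m2 p - m2trunc p k)) atTop (nhds 0) :=
    tendsto_of_tendsto_of_tendsto_of_le_of_le' tendsto_const_nhds b3
      (Filter.Eventually.of_forall hlb) (eventually_atTop.mpr ⟨1, b1⟩)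
  exact ⟨b1, b2, b3, b4⟩
end

section
/- Fix 0 < p < 1 and 0 < ε < 1/3. Let X₁, X₂, … and Y₁, Y₂, … be two independent collections of i.i.d. Z³-valued random variables, each distributed as X below. For v ∈ Z³ define G_{n,ε}(v) := { ‖v + Σ_{j=1}^{n⁴} (Y_j − X_j)‖₁ ≤ n^{2(1−ε)} }. Then there exist α > 0 and a constant C₆ > 0 such that for all n sufficiently large, sup{ P(G_{n,ε}(v)) : v ∈ Z³, n^{1−ε} < ‖v‖₁ ≤ n^{1+ε} } < C₆ n^{−α}. -/
open MeasureTheory ProbabilityTheory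

/-- the `ℓ¹`-norm on `ℤ³` -/
def l1n3 (w : Fin 3 → ℤ) : ℕ := ∑ i, (w i).natAbs

/-- the three-dimensional discrete `ℓ¹`-diamond `Δ_k = {w ∈ ℤ³ : ‖w‖₁ ≤ k}` -/
noncomputable def diamond3 (k : ℕ) : Finset (Fin 3 → ℤ) :=
  (Fintype.piFinset fun _ => Finset.Icc (-(k : ℤ)) (k : ℤ)).filter fun w => l1n3 w ≤ k

/-- the boundary `δΔ_k = {w ∈ ℤ³ : ‖w‖₁ = k}` of the diamond -/
noncomputable def sphere3 (k : ℕ) : Finset (Fin 3 → ℤ) :=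
  (Fintype.piFinset fun _ => Finset.Icc (-(k : ℤ)) (k : ℤ)).filter fun w => l1n3 w = k

/-- The step distribution of the drainage-network random walk on `ℤ³` with openness
parameter `p`: mass `p` at the origin `o`, and mass
`(1-p)^(#Δ_{k-1}) (1 - (1-p)^(#δΔ_k)) / #δΔ_k` at each `w ∈ δΔ_k`, `k ≥ 1`. -/
noncomputable def pstep3 (p : ℝ) (w : Fin 3 → ℤ) : ℝ :=
  if l1n3 w = 0 then p
  else (1 - p) ^ (diamond3 (l1n3 w - 1)).card *
    (1 - (1 - p) ^ (sphere3 (l1n3 w)).card) / ((sphere3 (l1n3 w)).card : ℝ)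


open scoped ENNReal

/-- type synonym for `ℤ → ℝ≥0∞` with convolution as multiplication -/
def CF : Type := ℤ → ℝ≥0∞

namespace CF

noncomputable instance : AddCommMonoid CF := Pi.addCommMonoid

/-- convolution -/
protected noncomputable def mul (a b : CF) : CF := fun x => ∑' z, a z * b (x - z)

/-- delta at 0 -/
noncomputable instance : One CF := ⟨fun x => if x = 0 then 1 else 0⟩

noncomputable instance : Mul CF := ⟨CF.mul⟩

lemma mul_apply (a b : CF) (x : ℤ) : (a * b) x = ∑' z, a z * b (x - z) := rfl

lemma one_apply (x : ℤ) : (1 : CF) x = if x = 0 then 1 else 0 := rfl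

lemma add_apply (a b : CF) (x : ℤ) : (a + b) x = a x + b x := rfl

lemma zero_apply (x : ℤ) : (0 : CF) x = 0 := rfl

protected lemma mul_comm (a b : CF) : a * b = b * a := by
  funext x
  rw [mul_apply, mul_apply]
  rw [← (Equiv.subLeft x).tsum_eq (fun z => b z * a (x - z))]
  simp only [Equiv.subLeft_apply, sub_sub_cancel, mul_comm]

protected lemma one_mul (a : CF) : 1 * a = a := by
  funext x
  rw [mul_apply]
  rw [tsum_eq_single 0 (by intro z hz; simp [one_apply, hz])]
  simp [one_apply]

protected lemma mul_one (a : CF) : a * 1 = a := by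
  rw [CF.mul_comm, CF.one_mul]

protected lemma mul_assoc (a b c : CF) : a * b * c = a * (b * c) := by
  funext x
  simp only [mul_apply]
  calc (∑' z, (∑' y, a y * b (z - y)) * c (x - z))
      = ∑' z, ∑' y, a y * b (z - y) * c (x - z) := by
        congr 1; funext z; exact ENNReal.tsum_mul_right.symm
    _ = ∑' y, ∑' z, a y * b (z - y) * c (x - z) := ENNReal.tsum_comm
    _ = ∑' y, a y * ∑' z, b (z - y) * c (x - z) := by
        congr 1; funext y
        rw [← ENNReal.tsum_mul_left]; congr 1; funext z; ring
    _ = ∑' y, a y * ∑' z, b z * c (x - y - z) := by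
        congr 1; funext y; congr 1
        rw [← (Equiv.addRight y).tsum_eq (fun z => b (z - y) * c (x - z))]
        simp only [Equiv.coe_addRight, add_sub_cancel_right]
        congr 1; funext z; congr 2; ring

protected lemma left_distrib (a b c : CF) : a * (b + c) = a * b + a * c := by
  funext x
  simp only [mul_apply, add_apply, mul_add]
  exact ENNReal.tsum_add

protected lemma zero_mul (a : CF) : 0 * a = 0 := by
  funext x; simp [mul_apply, zero_apply]

noncomputable instance : CommSemiring CF :=
  { (inferInstance : AddCommMonoid CF),
    (inferInstance : Mul CF), (inferInstance : One CF) with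
    mul_assoc := CF.mul_assoc
    mul_comm := CF.mul_comm
    one_mul := CF.one_mul
    mul_one := CF.mul_one
    left_distrib := CF.left_distrib
    right_distrib := fun a b c => by
      rw [CF.mul_comm, CF.left_distrib, CF.mul_comm c a, CF.mul_comm c b]
    zero_mul := CF.zero_mul
    mul_zero := fun a => by rw [CF.mul_comm, CF.zero_mul] }

lemma natCast_apply (k : ℕ) (x : ℤ) : (k : CF) x = if x = 0 then (k : ℝ≥0∞) else 0 := by
  induction k with
  | zero => simp [zero_apply]
  | succ k ih =>
    have : ((k + 1 : ℕ) : CF) = (k : CF) + 1 := by push_cast; ring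
    rw [this, add_apply, ih, one_apply]
    split <;> simp [Nat.cast_add]

lemma tsum_mul (a b : CF) : ∑' x, (a * b) x = (∑' x, a x) * (∑' x, b x) := by
  simp only [mul_apply]
  calc (∑' x, ∑' z, a z * b (x - z)) = ∑' z, ∑' x, a z * b (x - z) := ENNReal.tsum_comm
    _ = ∑' z, a z * ∑' x, b (x - z) := by
        congr 1; funext z; exact ENNReal.tsum_mul_left
    _ = ∑' z, a z * ∑' x, b x := by
        congr 1; funext z; congr 1
        rw [← (Equiv.addRight z).tsum_eq (fun x => b (x - z))]
        simp only [Equiv.coe_addRight, add_sub_cancel_right]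
    _ = (∑' z, a z) * ∑' x, b x := ENNReal.tsum_mul_right

lemma tsum_pow (a : CF) (m : ℕ) : ∑' x, (a ^ m) x = (∑' x, a x) ^ m := by
  induction m with
  | zero =>
      rw [pow_zero, pow_zero]; show (∑' x : ℤ, (if x = 0 then (1:ℝ≥0∞) else 0)) = 1
      simp [one_apply]
  | succ m ih => rw [pow_succ, tsum_mul, ih, pow_succ]

lemma apply_le_tsum (a : CF) (x : ℤ) : a x ≤ ∑' z, a z := ENNReal.le_tsum x

lemma mul_apply_le (a b : CF) (x : ℤ) {B : ℝ≥0∞} (hb : ∀ y, b y ≤ B) :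
    (a * b) x ≤ (∑' z, a z) * B := by
  rw [mul_apply]
  calc ∑' z, a z * b (x - z) ≤ ∑' z, a z * B :=
        ENNReal.tsum_le_tsum fun z => mul_le_mul_right (hb _) _
    _ = (∑' z, a z) * B := ENNReal.tsum_mul_right

lemma mul_mono (a b a' b' : CF) (ha : ∀ x, a x ≤ a' x) (hb : ∀ x, b x ≤ b' x) (x : ℤ) :
    (a * b) x ≤ (a' * b') x := by
  rw [mul_apply, mul_apply]
  exact ENNReal.tsum_le_tsum fun z => mul_le_mul' (ha z) (hb (x - z))

end CF


open scoped ENNReal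

/-- Rademacher step -/
noncomputable def tau : CF := fun z => if z = 1 ∨ z = -1 then 2⁻¹ else 0

lemma tau_apply_ne {z : ℤ} (h : ¬(z = 1 ∨ z = -1)) : tau z = 0 := if_neg h

lemma tau_one : tau 1 = 2⁻¹ := if_pos (Or.inl rfl)
lemma tau_neg_one : tau (-1) = 2⁻¹ := if_pos (Or.inr rfl)

lemma mem_pair_iff {z : ℤ} : z ∈ ({1, -1} : Finset ℤ) ↔ z = 1 ∨ z = -1 := by
  simp

lemma tsum_tau : ∑' z, tau z = 1 := by
  rw [tsum_eq_sum (s := ({1, -1} : Finset ℤ))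
    (fun z hz => tau_apply_ne (fun h => hz (mem_pair_iff.2 h)))]
  erw [Finset.sum_pair (by decide)]
  rw [tau_one, tau_neg_one, ENNReal.inv_two_add_inv_two]

lemma tau_pow_succ_apply (m : ℕ) (x : ℤ) :
    (tau ^ (m + 1)) x = 2⁻¹ * (tau ^ m) (x - 1) + 2⁻¹ * (tau ^ m) (x + 1) := by
  rw [pow_succ, CF.mul_comm, CF.mul_apply]
  rw [tsum_eq_sum (s := ({1, -1} : Finset ℤ))
    (fun z hz => by rw [tau_apply_ne (fun h => hz (mem_pair_iff.2 h)), zero_mul])]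
  rw [Finset.sum_pair (by decide), tau_one, tau_neg_one, sub_neg_eq_add]

lemma tau_pow_eq (m : ℕ) (x : ℤ) :
    (tau ^ m) x = if (m + x.natAbs) % 2 = 0 ∧ x.natAbs ≤ m
      then (2⁻¹ : ℝ≥0∞) ^ m * ((m.choose (((m : ℤ) + x).toNat / 2)) : ℝ≥0∞) else 0 := by
  induction m generalizing x with
  | zero =>
    rcases eq_or_ne x 0 with rfl | hx
    · simp [CF.one_apply]
    · rw [pow_zero, CF.one_apply, if_neg hx, if_neg]
      simp only [not_and, Nat.le_zero]
      intro _; omega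
  | succ m ih =>
    rw [tau_pow_succ_apply, ih, ih]
    split_ifs with h1 h2 h3 h2 h3 h3 h3
    · -- all three conditions hold: interior, Pascal
      have e2 : ((m : ℤ) + (x + 1)).toNat / 2 = ((m : ℤ) + (x - 1)).toNat / 2 + 1 := by omega
      have e3 : (((m + 1 : ℕ) : ℤ) + x).toNat / 2 = ((m : ℤ) + (x - 1)).toNat / 2 + 1 := by omega
      rw [e2, e3, Nat.choose_succ_succ' m (((m : ℤ) + (x - 1)).toNat / 2)]
      push_cast
      rw [pow_succ]
      ring
    · exfalso; omega
    · -- left term only: x = m + 1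
      have e1 : ((m : ℤ) + (x - 1)).toNat / 2 = m := by omega
      have e3 : (((m + 1 : ℕ) : ℤ) + x).toNat / 2 = m + 1 := by omega
      rw [e1, e3, Nat.choose_self, Nat.choose_self]
      rw [pow_succ]
      simp [mul_comm]
    · exfalso; omega
    · -- right term only: x = -(m+1)
      have e2 : ((m : ℤ) + (x + 1)).toNat / 2 = 0 := by omega
      have e3 : (((m + 1 : ℕ) : ℤ) + x).toNat / 2 = 0 := by omega
      rw [e2, e3, Nat.choose_zero_right, Nat.choose_zero_right]
      rw [pow_succ]
      simp [mul_comm]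
    · exfalso; omega
    · exfalso; omega
    · simp

lemma tau_pow_le_central (m : ℕ) (x : ℤ) :
    (tau ^ m) x ≤ (2⁻¹ : ℝ≥0∞) ^ m * ((m.choose (m / 2)) : ℝ≥0∞) := by
  rw [tau_pow_eq]
  split
  · exact mul_le_mul_right (Nat.cast_le.2 (Nat.choose_le_middle _ _)) _
  · exact zero_le

lemma centralBinom_sq_bound (i : ℕ) :
    (Nat.centralBinom i) ^ 2 * (2 * i + 1) ≤ 16 ^ i := by
  induction i with
  | zero => simp [Nat.centralBinom]
  | succ i ih =>
    have key := Nat.succ_mul_centralBinom_succ i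
    have h1 : (i + 1) ^ 2 * (Nat.centralBinom (i + 1) ^ 2 * (2 * (i + 1) + 1)) =
        (2 * i + 1) * (2 * i + 3) * (4 * ((Nat.centralBinom i) ^ 2 * (2 * i + 1))) := by
      have h : ((i + 1) * Nat.centralBinom (i + 1)) ^ 2 =
          (2 * (2 * i + 1) * Nat.centralBinom i) ^ 2 := by rw [key]
      nlinarith [h]
    have h4 : (i + 1) ^ 2 * (Nat.centralBinom (i + 1) ^ 2 * (2 * (i + 1) + 1)) ≤
        (i + 1) ^ 2 * 16 ^ (i + 1) := by
      calc (i + 1) ^ 2 * (Nat.centralBinom (i + 1) ^ 2 * (2 * (i + 1) + 1))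
          = (2 * i + 1) * (2 * i + 3) * (4 * ((Nat.centralBinom i) ^ 2 * (2 * i + 1))) := h1
        _ ≤ (2 * i + 1) * (2 * i + 3) * (4 * 16 ^ i) :=
            Nat.mul_le_mul_left _ (Nat.mul_le_mul_left _ ih)
        _ = ((2 * i + 1) * (2 * i + 3) * 4) * 16 ^ i := by ring
        _ ≤ ((i + 1) ^ 2 * 16) * 16 ^ i := Nat.mul_le_mul_right _ (by nlinarith)
        _ = (i + 1) ^ 2 * 16 ^ (i + 1) := by ring
    exact Nat.le_of_mul_le_mul_left h4 (by positivity)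


lemma choose_middle_real (m : ℕ) :
    ((m.choose (m / 2)) : ℝ) * Real.sqrt (m + 1) ≤ 2 ^ m * Real.sqrt 2 := by
  have sqrt2_ge : (1 : ℝ) ≤ Real.sqrt 2 := by
    rw [show (1:ℝ) = Real.sqrt 1 from (Real.sqrt_one).symm]
    exact Real.sqrt_le_sqrt (by norm_num)
  have key : ∀ i : ℕ, ((Nat.centralBinom i : ℝ)) * Real.sqrt (2 * i + 1) ≤ 4 ^ i := by
    intro i
    have h := centralBinom_sq_bound i
    have hr : ((Nat.centralBinom i : ℝ)) ^ 2 * (2 * i + 1) ≤ (16 : ℝ) ^ i := by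
      exact_mod_cast Nat.cast_le.2 h
    have : ((Nat.centralBinom i : ℝ)) * Real.sqrt (2 * i + 1) =
        Real.sqrt (((Nat.centralBinom i : ℝ)) ^ 2 * (2 * i + 1)) := by
      rw [Real.sqrt_mul (by positivity), Real.sqrt_sq (by positivity)]
    rw [this]
    calc Real.sqrt (((Nat.centralBinom i : ℝ)) ^ 2 * (2 * i + 1))
        ≤ Real.sqrt ((16 : ℝ) ^ i) := Real.sqrt_le_sqrt hr
      _ = 4 ^ i := by
          rw [show (16 : ℝ) ^ i = ((4:ℝ) ^ i) ^ 2 by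
            rw [← pow_mul, show i * 2 = 2 * i by ring, pow_mul]; norm_num]
          exact Real.sqrt_sq (by positivity)
  rcases Nat.even_or_odd m with ⟨i, hi⟩ | ⟨i, hi⟩
  · subst hi
    have hd : (i + i) / 2 = i := by omega
    have hc : (i + i).choose i = Nat.centralBinom i := by
      rw [Nat.centralBinom]; congr 1; omega
    rw [hd, hc]
    have : ((i + i : ℕ) : ℝ) + 1 = 2 * i + 1 := by push_cast; ring
    rw [this]
    calc (Nat.centralBinom i : ℝ) * Real.sqrt (2 * i + 1) ≤ 4 ^ i := key i
      _ ≤ 4 ^ i * Real.sqrt 2 := le_mul_of_one_le_right (by positivity) sqrt2_ge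
      _ = 2 ^ (i + i) * Real.sqrt 2 := by
          rw [show (4:ℝ) ^ i = 2 ^ (i + i) by
            rw [show (4:ℝ) = 2 ^ 2 by norm_num, ← pow_mul, show 2 * i = i + i by ring]]
  · subst hi
    have hd : (2 * i + 1) / 2 = i := by omega
    rw [hd]
    have hcb : ((2 * i + 1).choose i : ℝ) ≤ 2 * Nat.centralBinom i := by
      rcases Nat.eq_zero_or_pos i with rfl | hpos
      · simp [Nat.centralBinom]
      · obtain ⟨k, rfl⟩ := Nat.exists_eq_add_of_le hpos
        have : (2 * (1 + k) + 1).choose (1 + k) =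
            (2 * (1 + k)).choose k + (2 * (1 + k)).choose (k + 1) := by
          rw [show 2 * (1 + k) + 1 = (2 * (1 + k)) + 1 by ring,
            show 1 + k = k + 1 by ring, Nat.choose_succ_succ']
        have h1 : (2 * (1 + k)).choose k ≤ Nat.centralBinom (1 + k) := by
          rw [Nat.centralBinom]
          have := Nat.choose_le_middle k (2 * (1 + k))
          rwa [show 2 * (1 + k) / 2 = 1 + k by omega] at this
        have h2 : (2 * (1 + k)).choose (k + 1) ≤ Nat.centralBinom (1 + k) := by
          rw [Nat.centralBinom]
          have := Nat.choose_le_middle (k + 1) (2 * (1 + k))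
          rwa [show 2 * (1 + k) / 2 = 1 + k by omega] at this
        have h3 : (2 * (1 + k) + 1).choose (1 + k) ≤ 2 * Nat.centralBinom (1 + k) := by
          rw [this]; omega
        exact_mod_cast h3
    have hsq : Real.sqrt ((2 * i + 1 : ℕ) + 1) ≤ Real.sqrt 2 * Real.sqrt (2 * i + 1) := by
      rw [← Real.sqrt_mul (by norm_num)]
      apply Real.sqrt_le_sqrt
      push_cast; nlinarith [Nat.cast_nonneg (α := ℝ) i]
    calc ((2 * i + 1).choose i : ℝ) * Real.sqrt ((2 * i + 1 : ℕ) + 1)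
        ≤ (2 * Nat.centralBinom i) * (Real.sqrt 2 * Real.sqrt (2 * i + 1)) := by
          apply mul_le_mul hcb hsq (Real.sqrt_nonneg _) (by positivity)
      _ = 2 * Real.sqrt 2 * ((Nat.centralBinom i : ℝ) * Real.sqrt (2 * i + 1)) := by ring
      _ ≤ 2 * Real.sqrt 2 * 4 ^ i := by
          apply mul_le_mul_of_nonneg_left (key i) (by positivity)
      _ = 2 ^ (2 * i + 1) * Real.sqrt 2 := by
          rw [show (4:ℝ) ^ i = 2 ^ (2 * i) by
            rw [show (4:ℝ) = 2 ^ 2 by norm_num, ← pow_mul]]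
          rw [pow_succ]
          ring

lemma tau_pow_le_sqrt (m : ℕ) (x : ℤ) :
    (tau ^ m) x ≤ ENNReal.ofReal (Real.sqrt 2 / Real.sqrt (m + 1)) := by
  refine (tau_pow_le_central m x).trans ?_
  have he : (2⁻¹ : ℝ≥0∞) ^ m * ((m.choose (m / 2)) : ℝ≥0∞) =
      ENNReal.ofReal ((2⁻¹ : ℝ) ^ m * (m.choose (m / 2))) := by
    rw [ENNReal.ofReal_mul (by positivity), ENNReal.ofReal_pow (by norm_num),
      ENNReal.ofReal_natCast]
    congr 2
    rw [ENNReal.ofReal_inv_of_pos (by norm_num)]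
    norm_num
  rw [he]
  apply ENNReal.ofReal_le_ofReal
  have hs : (0 : ℝ) < Real.sqrt (m + 1) := Real.sqrt_pos.2 (by positivity)
  rw [le_div_iff₀ hs]
  have := choose_middle_real m
  have h2 : (0:ℝ) < 2 ^ m := by positivity
  calc (2⁻¹ : ℝ) ^ m * (m.choose (m / 2)) * Real.sqrt (m + 1)
      = ((m.choose (m / 2) : ℝ) * Real.sqrt (m + 1)) / 2 ^ m := by
        rw [inv_pow]; field_simp
  _ ≤ (2 ^ m * Real.sqrt 2) / 2 ^ m := (div_le_div_iff_of_pos_right h2).2 this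
  _ = Real.sqrt 2 := by field_simp

lemma tau_pow_le_one (m : ℕ) (x : ℤ) : (tau ^ m) x ≤ 1 := by
  calc (tau ^ m) x ≤ ∑' z, (tau ^ m) z := CF.apply_le_tsum _ _
    _ = (∑' z, tau z) ^ m := CF.tsum_pow _ _
    _ = 1 := by rw [tsum_tau, one_pow]


lemma mem_diamond3 {k : ℕ} {w : Fin 3 → ℤ} : w ∈ diamond3 k ↔ l1n3 w ≤ k := by
  constructor
  · intro h; exact (Finset.mem_filter.1 h).2
  · intro h
    refine Finset.mem_filter.2 ⟨Fintype.mem_piFinset.2 fun i => ?_, h⟩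
    have hi : (w i).natAbs ≤ l1n3 w := Finset.single_le_sum (f := fun i => (w i).natAbs)
      (fun _ _ => Nat.zero_le _) (Finset.mem_univ i)
    have : (w i).natAbs ≤ k := le_trans hi h
    rw [Finset.mem_Icc]; omega

lemma mem_sphere3 {k : ℕ} {w : Fin 3 → ℤ} : w ∈ sphere3 k ↔ l1n3 w = k := by
  constructor
  · intro h; exact (Finset.mem_filter.1 h).2
  · intro h
    refine Finset.mem_filter.2 ⟨Fintype.mem_piFinset.2 fun i => ?_, h⟩
    have hi : (w i).natAbs ≤ l1n3 w := Finset.single_le_sum (f := fun i => (w i).natAbs)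
      (fun _ _ => Nat.zero_le _) (Finset.mem_univ i)
    have : (w i).natAbs ≤ k := by omega
    rw [Finset.mem_Icc]; omega

lemma diamond3_succ (k : ℕ) : diamond3 (k + 1) = diamond3 k ∪ sphere3 (k + 1) := by
  ext w
  simp only [mem_diamond3, Finset.mem_union, mem_sphere3]
  omega

lemma diamond3_disj (k : ℕ) : Disjoint (diamond3 k) (sphere3 (k + 1)) := by
  rw [Finset.disjoint_left]
  intro w hw hw'
  rw [mem_diamond3] at hw; rw [mem_sphere3] at hw'
  omega

lemma diamond3_zero : diamond3 0 = {0} := by decide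

lemma sphere3_one_card : (sphere3 1).card = 6 := by decide

lemma sphere3_nonempty (k : ℕ) : (sphere3 (k + 1)).Nonempty := by
  refine ⟨![(k + 1 : ℤ), 0, 0], ?_⟩
  rw [mem_sphere3, l1n3, Fin.sum_univ_three]
  simp
  omega

lemma card_diamond3_succ (k : ℕ) :
    (diamond3 (k + 1)).card = (diamond3 k).card + (sphere3 (k + 1)).card := by
  rw [diamond3_succ, Finset.card_union_of_disjoint (diamond3_disj k)]

variable {p : ℝ}

lemma pstep3_nonneg (hp0 : 0 < p) (hp1 : p < 1) (w : Fin 3 → ℤ) : 0 ≤ pstep3 p w := by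
  rw [pstep3]
  split
  · linarith
  · apply div_nonneg _ (Nat.cast_nonneg _)
    apply mul_nonneg (pow_nonneg (by linarith) _)
    have : (1 - p) ^ (sphere3 (l1n3 w)).card ≤ 1 := by
      apply pow_le_one₀ (by linarith) (by linarith)
    linarith

lemma l1n3_zero_iff {w : Fin 3 → ℤ} : l1n3 w = 0 ↔ w = 0 := by
  constructor
  · intro h
    funext i
    have hi : (w i).natAbs ≤ l1n3 w := Finset.single_le_sum (f := fun i => (w i).natAbs)
      (fun _ _ => Nat.zero_le _) (Finset.mem_univ i)
    have : (w i).natAbs = 0 := by omega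
    simpa [Int.natAbs_eq_zero] using this
  · intro h; subst h; rfl

lemma sum_diamond3_pstep3 (hp0 : 0 < p) (hp1 : p < 1) (K : ℕ) :
    ∑ w ∈ diamond3 K, pstep3 p w = p + (1 - p) - (1 - p) ^ (diamond3 K).card := by
  induction K with
  | zero =>
    rw [diamond3_zero]
    simp only [Finset.sum_singleton, Finset.card_singleton, pow_one]
    rw [pstep3, if_pos (l1n3_zero_iff.2 rfl)]
    ring
  | succ K ih =>
    rw [diamond3_succ, Finset.sum_union (diamond3_disj K), ih]
    have hval : ∀ w ∈ sphere3 (K + 1), pstep3 p w =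
        (1 - p) ^ (diamond3 K).card * (1 - (1 - p) ^ (sphere3 (K + 1)).card) /
          ((sphere3 (K + 1)).card : ℝ) := by
      intro w hw
      rw [mem_sphere3] at hw
      rw [pstep3, if_neg (by omega), hw]
      norm_num
    rw [Finset.sum_congr rfl hval, Finset.sum_const, nsmul_eq_mul]
    have hcard : (0 : ℝ) < ((sphere3 (K + 1)).card : ℝ) := by
      have := sphere3_nonempty K
      exact_mod_cast Nat.cast_pos.2 (Finset.card_pos.2 this)
    rw [← diamond3_succ, card_diamond3_succ]
    field_simp
    ring_nf

lemma tsum_pstep3_le_one (hp0 : 0 < p) (hp1 : p < 1) :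
    ∑' w : Fin 3 → ℤ, ENNReal.ofReal (pstep3 p w) ≤ 1 := by
  rw [ENNReal.tsum_eq_iSup_sum]
  apply iSup_le
  intro F
  have hsub : F ⊆ diamond3 (F.sup l1n3) := by
    intro w hw
    rw [mem_diamond3]
    exact Finset.le_sup hw
  calc ∑ w ∈ F, ENNReal.ofReal (pstep3 p w)
      ≤ ∑ w ∈ diamond3 (F.sup l1n3), ENNReal.ofReal (pstep3 p w) :=
        Finset.sum_le_sum_of_subset hsub
    _ = ENNReal.ofReal (∑ w ∈ diamond3 (F.sup l1n3), pstep3 p w) :=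
        (ENNReal.ofReal_sum_of_nonneg (fun w _ => pstep3_nonneg hp0 hp1 w)).symm
    _ ≤ 1 := by
        rw [sum_diamond3_pstep3 hp0 hp1]
        rw [show (1 : ℝ≥0∞) = ENNReal.ofReal 1 by simp]
        apply ENNReal.ofReal_le_ofReal
        have : 0 ≤ (1 - p) ^ (diamond3 (F.sup l1n3)).card := pow_nonneg (by linarith) _
        linarith

/-- the first unit vector -/
def ee1 : Fin 3 → ℤ := fun i => if i = 0 then 1 else 0

lemma l1n3_ee1 : l1n3 ee1 = 1 := by decide

lemma l1n3_neg_ee1 : l1n3 (-ee1) = 1 := by decide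

lemma diamond3_zero_card : (diamond3 0).card = 1 := by rw [diamond3_zero]; rfl

lemma pstep3_of_l1n3_one {w : Fin 3 → ℤ} (hw : l1n3 w = 1) :
    pstep3 p w = (1 - p) * (1 - (1 - p) ^ 6) / 6 := by
  rw [pstep3, if_neg (by omega), hw]
  norm_num [sphere3_one_card, diamond3_zero_card]


/-- the ℤ³ step weights -/
noncomputable def Astep (p : ℝ) : (Fin 3 → ℤ) → ℝ≥0∞ := fun w => ENNReal.ofReal (pstep3 p w)

/-- the first-coordinate projection of the step weights -/
noncomputable def bstep (p : ℝ) : CF :=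
  fun y => ∑' w : Fin 3 → ℤ, if w 0 = y then Astep p w else 0

noncomputable def qreal (p : ℝ) : ℝ := (1 - p) * (1 - (1 - p) ^ 6) / 6

noncomputable def qq (p : ℝ) : ℝ≥0∞ := ENNReal.ofReal (qreal p)

lemma qreal_pos (hp0 : 0 < p) (hp1 : p < 1) : 0 < qreal p := by
  have h6 : (1 - p) ^ 6 < 1 := by
    apply pow_lt_one₀ (by linarith) (by linarith) (by norm_num)
  have h : 0 < 1 - p := by linarith
  rw [qreal]
  apply div_pos (mul_pos h (by linarith)) (by norm_num)

lemma qreal_lt (hp0 : 0 < p) (hp1 : p < 1) : qreal p < 1 / 6 := by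
  rw [qreal]
  have h1 : 0 < 1 - p := by linarith
  have h6 : 0 < (1 - p) ^ 6 := by positivity
  have h2 : (1 - p) * (1 - (1 - p) ^ 6) < 1 := by nlinarith [pow_le_one₀ (le_of_lt h1) (by linarith : (1:ℝ) - p ≤ 1) (n := 6)]
  linarith

lemma tsum_bstep_le_one (hp0 : 0 < p) (hp1 : p < 1) : ∑' y : ℤ, bstep p y ≤ 1 := by
  have : ∑' y : ℤ, bstep p y = ∑' w : Fin 3 → ℤ, Astep p w := by
    have hb : ∀ y : ℤ, bstep p y = ∑' w : Fin 3 → ℤ, if w 0 = y then Astep p w else 0 :=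
      fun y => rfl
    simp only [hb]
    rw [ENNReal.tsum_comm]
    congr 1; funext w
    rw [tsum_eq_single (w 0) (fun y hy => if_neg (Ne.symm hy)), if_pos rfl]
  rw [this]
  exact tsum_pstep3_le_one hp0 hp1

lemma qq_le_bstep_one : qq p ≤ bstep p 1 := by
  have := ENNReal.le_tsum (f := fun w : Fin 3 → ℤ => if w 0 = 1 then Astep p w else 0) ee1
  simpa [ee1, Astep, pstep3_of_l1n3_one l1n3_ee1, qq, qreal, bstep] using this

lemma qq_le_bstep_neg_one : qq p ≤ bstep p (-1) := by
  have := ENNReal.le_tsum (f := fun w : Fin 3 → ℤ => if w 0 = -1 then Astep p w else 0) (-ee1)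
  simpa [ee1, Astep, pstep3_of_l1n3_one l1n3_neg_ee1, qq, qreal, bstep] using this

/-- the extracted Rademacher component -/
noncomputable def sstep (p : ℝ) : CF := fun z => if z = 1 ∨ z = -1 then qq p else 0

lemma sstep_le_bstep : ∀ z, sstep p z ≤ bstep p z := by
  intro z
  rw [sstep]
  split
  · rename_i h
    rcases h with rfl | rfl
    · exact qq_le_bstep_one
    · exact qq_le_bstep_neg_one
  · exact zero_le

/-- the residual component -/
noncomputable def nustep (p : ℝ) : CF := fun z => bstep p z - sstep p z

lemma bstep_eq_add : bstep p = sstep p + nustep p := by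
  funext z
  rw [CF.add_apply]
  exact (add_tsub_cancel_of_le (sstep_le_bstep z)).symm

lemma tsum_sstep : ∑' z, sstep p z = 2 * qq p := by
  rw [show (∑' z, sstep p z) = ∑' z, (if z = 1 ∨ z = -1 then qq p else 0) from rfl]
  rw [tsum_eq_sum (s := ({1, -1} : Finset ℤ))
    (fun z hz => if_neg (fun h => hz (mem_pair_iff.2 h)))]
  rw [Finset.sum_pair (by decide)]
  norm_num
  rw [two_mul]

lemma mass_add (hp0 : 0 < p) (hp1 : p < 1) : 2 * qq p + ∑' z, nustep p z ≤ 1 := by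
  rw [← tsum_sstep]
  erw [← ENNReal.tsum_add]
  calc ∑' z, (sstep p z + nustep p z) = ∑' z, bstep p z := by
        congr 1; funext z
        rw [nustep, add_tsub_cancel_of_le (sstep_le_bstep z)]
    _ ≤ 1 := tsum_bstep_le_one hp0 hp1

lemma two_qq_mul_inv_two : 2 * qq p * 2⁻¹ = qq p := by
  rw [mul_comm (2 : ℝ≥0∞) (qq p), mul_assoc, ENNReal.mul_inv_cancel two_ne_zero ENNReal.ofNat_ne_top,
    mul_one]

lemma sstep_pow_apply (j : ℕ) (z : ℤ) :
    (sstep p ^ j) z = (2 * qq p) ^ j * (tau ^ j) z := by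
  induction j generalizing z with
  | zero => simp
  | succ j ih =>
    rw [pow_succ' (sstep p), pow_succ' tau, CF.mul_apply, CF.mul_apply, ← ENNReal.tsum_mul_left]
    congr 1; funext y
    have hs : sstep p y = 2 * qq p * tau y := by
      rw [sstep, tau]
      split
      · rw [two_qq_mul_inv_two]
      · rw [mul_zero]
    rw [hs, ih]
    ring

/-- finite sums of `CF` evaluate pointwise -/
lemma CF.fsum_apply {β : Type*} (S : Finset β) (F : β → CF) (x : ℤ) :
    (∑ j ∈ S, F j) x = ∑ j ∈ S, F j x := by
  classical
  induction S using Finset.induction with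
  | empty => rfl
  | insert a s h ih =>
    rw [Finset.sum_insert h, Finset.sum_insert h, CF.add_apply, ih]

lemma CF.mul_natCast_apply (f : CF) (c : ℕ) (y : ℤ) :
    (f * (c : CF)) y = (c : ℝ≥0∞) * f y := by
  rw [CF.mul_apply]
  rw [tsum_eq_single y (fun z hz => by
    rw [CF.natCast_apply, if_neg (by omega), mul_zero])]
  rw [CF.natCast_apply, if_pos (by omega), mul_comm]

lemma mul_pow_apply_le (f g : CF) (j k : ℕ) (y : ℤ) {B : ℝ≥0∞}
    (hf : ∀ z, (f ^ j) z ≤ B) :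
    ((f ^ j) * (g ^ k)) y ≤ B * (∑' z, g z) ^ k := by
  rw [CF.mul_comm, CF.mul_apply]
  calc ∑' z, (g ^ k) z * (f ^ j) (y - z) ≤ ∑' z, (g ^ k) z * B :=
        ENNReal.tsum_le_tsum fun z => mul_le_mul_right (hf _) _
    _ = (∑' z, (g ^ k) z) * B := ENNReal.tsum_mul_right
    _ = B * (∑' z, g z) ^ k := by rw [CF.tsum_pow, mul_comm]

/-- Main pointwise bound for powers of the projected step distribution. -/
lemma bstep_pow_apply_le (hp0 : 0 < p) (hp1 : p < 1) (m t : ℕ) (ht : t ≤ m) (y : ℤ) :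
    (bstep p ^ m) y ≤ ENNReal.ofReal (Real.sqrt 2 / Real.sqrt (t + 1))
      + 2 ^ t * ENNReal.ofReal (1 - qreal p) ^ m := by
  set K : ℝ≥0∞ := ENNReal.ofReal (Real.sqrt 2 / Real.sqrt (t + 1)) with hK
  have hmass := mass_add hp0 hp1 (p := p)
  set νm : ℝ≥0∞ := ∑' z, nustep p z with hνm
  -- pointwise bounds on tau powers
  have htau : ∀ j, t ≤ j → ∀ z, (tau ^ j) z ≤ K := by
    intro j hj z
    refine (tau_pow_le_sqrt j z).trans (ENNReal.ofReal_le_ofReal ?_)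
    have hc : ((t : ℝ) + 1) ≤ ((j : ℝ) + 1) := by
      have : (t : ℝ) ≤ (j : ℝ) := Nat.cast_le.2 hj
      linarith
    gcongr
  -- expansion
  rw [bstep_eq_add, add_pow, CF.fsum_apply]
  have hterm : ∀ j ∈ Finset.range (m + 1),
      ((sstep p ^ j * nustep p ^ (m - j)) * ((m.choose j : ℕ) : CF)) y ≤
        (m.choose j : ℝ≥0∞) * ((2 * qq p) ^ j * (if j < t then 1 else K) * νm ^ (m - j)) := by
    intro j hj
    rw [CF.mul_natCast_apply]
    apply mul_le_mul_right
    have hb : ∀ z, (sstep p ^ j) z ≤ (2 * qq p) ^ j * (if j < t then 1 else K) := by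
      intro z
      rw [sstep_pow_apply]
      apply mul_le_mul_right
      split
      · exact tau_pow_le_one j z
      · exact htau j (by omega) z
    calc ((sstep p ^ j) * (nustep p ^ (m - j))) y
        ≤ ((2 * qq p) ^ j * (if j < t then 1 else K)) * νm ^ (m - j) :=
          mul_pow_apply_le _ _ _ _ _ hb
      _ = (2 * qq p) ^ j * (if j < t then 1 else K) * νm ^ (m - j) := by ring
  refine (Finset.sum_le_sum hterm).trans ?_
  -- split the ite
  have hsplit : ∀ j ∈ Finset.range (m + 1),
      (m.choose j : ℝ≥0∞) * ((2 * qq p) ^ j * (if j < t then 1 else K) * νm ^ (m - j)) ≤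
        (m.choose j : ℝ≥0∞) * ((2 * qq p) ^ j * K * νm ^ (m - j)) +
        (m.choose j : ℝ≥0∞) * (2 ^ t * (qq p ^ j * νm ^ (m - j))) := by
    intro j hj
    split
    · rename_i hlt
      apply le_add_of_nonneg_of_le (zero_le)
      rw [show (2 * qq p) ^ j = 2 ^ j * qq p ^ j by rw [mul_pow]]
      calc (m.choose j : ℝ≥0∞) * (2 ^ j * qq p ^ j * 1 * νm ^ (m - j))
          = (m.choose j : ℝ≥0∞) * (2 ^ j * (qq p ^ j * νm ^ (m - j))) := by ring
        _ ≤ (m.choose j : ℝ≥0∞) * (2 ^ t * (qq p ^ j * νm ^ (m - j))) := by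
            apply mul_le_mul_right
            apply mul_le_mul_left
            exact pow_le_pow_right' (by norm_num) (by omega)
    · exact le_add_of_le_of_nonneg le_rfl (zero_le)
  refine (Finset.sum_le_sum hsplit).trans ?_
  rw [Finset.sum_add_distrib]
  apply add_le_add
  · -- main term
    have : ∑ j ∈ Finset.range (m + 1),
        (m.choose j : ℝ≥0∞) * ((2 * qq p) ^ j * K * νm ^ (m - j)) =
        K * ∑ j ∈ Finset.range (m + 1), (2 * qq p) ^ j * νm ^ (m - j) * (m.choose j : ℝ≥0∞) := by
      rw [Finset.mul_sum]
      congr 1; funext j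
      ring
    rw [this, ← add_pow]
    calc K * (2 * qq p + νm) ^ m ≤ K * 1 ^ m := by
          apply mul_le_mul_right
          apply pow_le_pow_left' hmass
      _ = K := by rw [one_pow, mul_one]
  · -- tail term
    have : ∑ j ∈ Finset.range (m + 1),
        (m.choose j : ℝ≥0∞) * (2 ^ t * (qq p ^ j * νm ^ (m - j))) =
        2 ^ t * ∑ j ∈ Finset.range (m + 1), qq p ^ j * νm ^ (m - j) * (m.choose j : ℝ≥0∞) := by
      rw [Finset.mul_sum]
      congr 1; funext j
      ring
    rw [this, ← add_pow]
    apply mul_le_mul_right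
    apply pow_le_pow_left'
    have h1 : qq p + (qq p + νm) ≤ 1 := by
      calc qq p + (qq p + νm) = 2 * qq p + νm := by ring
        _ ≤ 1 := hmass
    have h2 : qq p + νm ≤ 1 - qq p :=
      ENNReal.le_sub_of_add_le_left (by simp [qq]) h1
    refine h2.trans ?_
    rw [ENNReal.ofReal_sub _ (le_of_lt (qreal_pos hp0 hp1)), ENNReal.ofReal_one]
    exact le_rfl


lemma bstep_mul_apply (p : ℝ) (F : CF) (c : ℤ) :
    (bstep p * F) c = ∑' w : Fin 3 → ℤ, Astep p w * F (c - w 0) := by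
  rw [CF.mul_apply]
  have hb : ∀ z : ℤ, bstep p z * F (c - z) =
      ∑' w : Fin 3 → ℤ, (if w 0 = z then Astep p w * F (c - z) else 0) := by
    intro z
    rw [show bstep p z = ∑' w : Fin 3 → ℤ, if w 0 = z then Astep p w else 0 from rfl,
      ← ENNReal.tsum_mul_right]
    congr 1; funext w
    split <;> simp
  calc (∑' z, bstep p z * F (c - z))
      = ∑' z, ∑' w : Fin 3 → ℤ, (if w 0 = z then Astep p w * F (c - z) else 0) := by
        congr 1; funext z; exact hb z
    _ = ∑' w : Fin 3 → ℤ, ∑' z, (if w 0 = z then Astep p w * F (c - z) else 0) :=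
        ENNReal.tsum_comm
    _ = ∑' w : Fin 3 → ℤ, Astep p w * F (c - w 0) := by
        congr 1; funext w
        rw [tsum_eq_single (w 0) (fun z hz => if_neg (Ne.symm hz)), if_pos rfl]

lemma dstep_eq (p : ℝ) (M : ℕ) (c : ℤ) :
    (∑' g : Fin M → (Fin 3 → ℤ),
      if (∑ j, g j 0) = c then ∏ j, Astep p (g j) else 0) = (bstep p ^ M) c := by
  induction M generalizing c with
  | zero =>
    rw [pow_zero]
    rw [tsum_eq_single (fun j => 0) (fun g hg => absurd (funext fun j => absurd j.isLt (by omega))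
      hg)]
    simp only [Finset.univ_eq_empty, Finset.sum_empty, Finset.prod_empty, CF.one_apply]
    by_cases h : c = 0
    · subst h; simp
    · rw [if_neg (fun hh => h hh.symm), if_neg h]
  | succ M ih =>
    rw [pow_succ', bstep_mul_apply]
    rw [← (Fin.consEquiv (fun _ : Fin (M + 1) => (Fin 3 → ℤ))).tsum_eq]
    rw [ENNReal.tsum_prod']
    congr 1; funext w
    rw [← ih (c - w 0), ← ENNReal.tsum_mul_left]
    congr 1; funext g
    simp only [Fin.consEquiv_apply]
    rw [Fin.sum_univ_succ, Fin.prod_univ_succ]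
    simp only [Fin.cons_zero, Fin.cons_succ]
    by_cases h : w 0 + ∑ j : Fin M, g j 0 = c
    · rw [if_pos h, if_pos (by omega)]
    · rw [if_neg h, if_neg (by omega), mul_zero]

lemma tsum_prod_Astep (p : ℝ) (M : ℕ) :
    ∑' f : Fin M → (Fin 3 → ℤ), ∏ j, Astep p (f j) =
      (∑' w : Fin 3 → ℤ, Astep p w) ^ M := by
  induction M with
  | zero =>
    rw [pow_zero]
    rw [tsum_eq_single (fun j => 0) (fun g hg => absurd (funext fun j => absurd j.isLt (by omega))
      hg)]
    simp
  | succ M ih =>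
    rw [← (Fin.consEquiv (fun _ : Fin (M + 1) => (Fin 3 → ℤ))).tsum_eq, ENNReal.tsum_prod']
    have hcore : ∀ (w : Fin 3 → ℤ) (g : Fin M → Fin 3 → ℤ),
        (∏ j : Fin (M + 1), Astep p ((Fin.consEquiv fun _ : Fin (M + 1) => (Fin 3 → ℤ)) (w, g) j))
          = Astep p w * ∏ j : Fin M, Astep p (g j) := by
      intro w g
      simp only [Fin.consEquiv_apply]
      rw [Fin.prod_univ_succ]
      simp [Fin.cons_succ]
    simp only [hcore]
    calc (∑' w : Fin 3 → ℤ, ∑' g : Fin M → (Fin 3 → ℤ), Astep p w * ∏ j, Astep p (g j))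
        = ∑' w : Fin 3 → ℤ, Astep p w * ∑' g : Fin M → (Fin 3 → ℤ), ∏ j, Astep p (g j) := by
          congr 1; funext w; exact ENNReal.tsum_mul_left
      _ = (∑' w : Fin 3 → ℤ, Astep p w) ^ (M + 1) := by
          rw [ih, ENNReal.tsum_mul_right, pow_succ']

section Reduction

variable {Ω : Type} [MeasurableSpace Ω] (P : Measure Ω) [IsProbabilityMeasure P]
variable (X Y : ℕ → Ω → (Fin 3 → ℤ))

lemma measurable_singleton_G (w : Fin 3 → ℤ) : MeasurableSet ({w} : Set (Fin 3 → ℤ)) := by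
  have h : ({w} : Set (Fin 3 → ℤ)) = ⋂ i, (fun x : Fin 3 → ℤ => x i) ⁻¹' {w i} := by
    ext x
    simp only [Set.mem_singleton_iff, Set.mem_iInter, Set.mem_preimage, funext_iff]
  rw [h]
  exact MeasurableSet.iInter fun i => (measurable_pi_apply i) (measurableSet_singleton _)

/-- probability of a cylinder event -/
lemma cyl_prob (p : ℝ)
    (hindep : ProbabilityTheory.iIndepFun (Sum.elim X Y) P)
    (hX : ∀ i w, P {ω | X i ω = w} = ENNReal.ofReal (pstep3 p w))
    (hY : ∀ i w, P {ω | Y i ω = w} = ENNReal.ofReal (pstep3 p w))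
    (M : ℕ) (f g : Fin M → (Fin 3 → ℤ)) :
    P {ω | (∀ j : Fin M, X j ω = f j) ∧ (∀ j : Fin M, Y j ω = g j)} =
      (∏ j, Astep p (f j)) * (∏ j, Astep p (g j)) := by
  classical
  set st : ℕ ⊕ ℕ → Set (Fin 3 → ℤ) := fun i => Sum.elim
    (fun a => if h : a < M then ({f ⟨a, h⟩} : Set (Fin 3 → ℤ)) else Set.univ)
    (fun a => if h : a < M then ({g ⟨a, h⟩} : Set (Fin 3 → ℤ)) else Set.univ) i with hst
  set S : Finset (ℕ ⊕ ℕ) :=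
    ((Finset.range M).image Sum.inl) ∪ ((Finset.range M).image Sum.inr) with hS
  have hmeas : ∀ i, i ∈ S → MeasurableSet (st i) := by
    intro i _
    rcases i with a | a <;> · simp only [hst, Sum.elim_inl, Sum.elim_inr]
                              split
                              · exact measurable_singleton_G _
                              · exact MeasurableSet.univ
  have hset : {ω | (∀ j : Fin M, X j ω = f j) ∧ (∀ j : Fin M, Y j ω = g j)} =
      ⋂ i ∈ S, (Sum.elim X Y i) ⁻¹' st i := by
    ext ω
    simp only [Set.mem_setOf_eq, Set.mem_iInter, hS, Finset.mem_union, Finset.mem_image,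
      Finset.mem_range]
    constructor
    · rintro ⟨h1, h2⟩ i hi
      rcases hi with ⟨a, ha, rfl⟩ | ⟨a, ha, rfl⟩
      · simp only [Sum.elim_inl, Set.mem_preimage, hst, dif_pos ha]
        exact h1 ⟨a, ha⟩
      · simp only [Sum.elim_inr, Set.mem_preimage, hst, dif_pos ha]
        exact h2 ⟨a, ha⟩
    · intro h
      constructor
      · intro j
        have := h (Sum.inl j.val) (Or.inl ⟨j.val, j.isLt, rfl⟩)
        simpa [hst, dif_pos j.isLt, Fin.eta] using this
      · intro j
        have := h (Sum.inr j.val) (Or.inr ⟨j.val, j.isLt, rfl⟩)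
        simpa [hst, dif_pos j.isLt, Fin.eta] using this
  rw [hset, hindep.measure_inter_preimage_eq_mul S hmeas]
  have hdisj : Disjoint ((Finset.range M).image Sum.inl) ((Finset.range M).image Sum.inr) := by
    rw [Finset.disjoint_left]
    rintro i hi hi'
    simp only [Finset.mem_image] at hi hi'
    obtain ⟨a, _, rfl⟩ := hi
    obtain ⟨b, _, hb⟩ := hi'
    cases hb
  rw [hS, Finset.prod_union hdisj,
    Finset.prod_image (fun a _ b _ h => Sum.inl_injective h),
    Finset.prod_image (fun a _ b _ h => Sum.inr_injective h)]
  congr 1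
  · calc ∏ a ∈ Finset.range M, P (Sum.elim X Y (Sum.inl a) ⁻¹' st (Sum.inl a))
        = ∏ a ∈ Finset.range M, (fun a => if h : a < M then Astep p (f ⟨a, h⟩) else 1) a := by
          apply Finset.prod_congr rfl
          intro a ha
          rw [Finset.mem_range] at ha
          simp only [Sum.elim_inl, hst, dif_pos ha]
          have he : X a ⁻¹' {f ⟨a, ha⟩} = {ω | X a ω = f ⟨a, ha⟩} := rfl
          rw [he, hX a (f ⟨a, ha⟩)]
          rfl
      _ = ∏ j : Fin M, (fun a => if h : a < M then Astep p (f ⟨a, h⟩) else 1) j.val :=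
          (Fin.prod_univ_eq_prod_range _ M).symm
      _ = ∏ j : Fin M, Astep p (f j) := by
          apply Finset.prod_congr rfl
          intro j _
          simp only [dif_pos j.isLt, Fin.eta]
  · calc ∏ a ∈ Finset.range M, P (Sum.elim X Y (Sum.inr a) ⁻¹' st (Sum.inr a))
        = ∏ a ∈ Finset.range M, (fun a => if h : a < M then Astep p (g ⟨a, h⟩) else 1) a := by
          apply Finset.prod_congr rfl
          intro a ha
          rw [Finset.mem_range] at ha
          simp only [Sum.elim_inr, hst, dif_pos ha]
          have he : Y a ⁻¹' {g ⟨a, ha⟩} = {ω | Y a ω = g ⟨a, ha⟩} := rfl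
          rw [he, hY a (g ⟨a, ha⟩)]
          rfl
      _ = ∏ j : Fin M, (fun a => if h : a < M then Astep p (g ⟨a, h⟩) else 1) j.val :=
          (Fin.prod_univ_eq_prod_range _ M).symm
      _ = ∏ j : Fin M, Astep p (g j) := by
          apply Finset.prod_congr rfl
          intro j _
          simp only [dif_pos j.isLt, Fin.eta]

end Reduction


open scoped Classical in
lemma event_prob_le (p : ℝ) (hp0 : 0 < p) (hp1 : p < 1)
    {Ω : Type} [MeasurableSpace Ω] (P : Measure Ω) [IsProbabilityMeasure P]
    (X Y : ℕ → Ω → (Fin 3 → ℤ))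
    (hindep : ProbabilityTheory.iIndepFun (Sum.elim X Y) P)
    (hX : ∀ i w, P {ω | X i ω = w} = ENNReal.ofReal (pstep3 p w))
    (hY : ∀ i w, P {ω | Y i ω = w} = ENNReal.ofReal (pstep3 p w))
    (M R : ℕ) (v : Fin 3 → ℤ) (Brad : ℝ) (hRB : Brad ≤ (R : ℝ))
    (Bpt : ℝ≥0∞) (hpt : ∀ c : ℤ, (bstep p ^ M) c ≤ Bpt) :
    P {ω | (l1n3 (v + ∑ j ∈ Finset.range M, (Y j ω - X j ω)) : ℝ) ≤ Brad} ≤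
      (2 * R + 1 : ℕ) * Bpt := by
  set cond : (Fin M → (Fin 3 → ℤ)) × (Fin M → (Fin 3 → ℤ)) → Prop :=
    fun pr => (l1n3 (v + ∑ j : Fin M, (pr.2 j - pr.1 j)) : ℝ) ≤ Brad with hcond
  set SS : (Fin M → (Fin 3 → ℤ)) × (Fin M → (Fin 3 → ℤ)) → Set Ω := fun pr =>
    if cond pr then {ω | (∀ j : Fin M, X j ω = pr.1 j) ∧ (∀ j : Fin M, Y j ω = pr.2 j)}
    else ∅ with hSS
  have hsub : {ω | (l1n3 (v + ∑ j ∈ Finset.range M, (Y j ω - X j ω)) : ℝ) ≤ Brad} ⊆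
      ⋃ pr, SS pr := by
    intro ω hω
    refine Set.mem_iUnion.2 ⟨(fun j => X j ω, fun j => Y j ω), ?_⟩
    have hc : cond (fun j => X j ω, fun j => Y j ω) := by
      rw [hcond]
      have e : (∑ j : Fin M, (Y (j : ℕ) ω - X (j : ℕ) ω)) =
          ∑ j ∈ Finset.range M, (Y j ω - X j ω) :=
        Fin.sum_univ_eq_sum_range (fun j => Y j ω - X j ω) M
      change (l1n3 (v + ∑ j : Fin M, (Y (j : ℕ) ω - X (j : ℕ) ω)) : ℝ) ≤ Brad
      rw [e]
      exact hω
    simp only [hSS]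
    rw [if_pos hc]
    exact ⟨fun j => rfl, fun j => rfl⟩
  refine (measure_mono hsub).trans ((measure_iUnion_le SS).trans ?_)
  have hSSval : ∀ pr, P (SS pr) =
      if cond pr then (∏ j, Astep p (pr.1 j)) * (∏ j, Astep p (pr.2 j)) else 0 := by
    intro pr
    simp only [hSS]
    by_cases h : cond pr
    · rw [if_pos h, if_pos h, cyl_prob P X Y p hindep hX hY M pr.1 pr.2]
    · rw [if_neg h, if_neg h, measure_empty]
  calc (∑' pr, P (SS pr))
      = ∑' pr : (Fin M → (Fin 3 → ℤ)) × (Fin M → (Fin 3 → ℤ)),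
          (if cond pr then (∏ j, Astep p (pr.1 j)) * (∏ j, Astep p (pr.2 j)) else 0) := by
        congr 1; funext pr; exact hSSval pr
    _ = ∑' f : Fin M → (Fin 3 → ℤ), ∑' g : Fin M → (Fin 3 → ℤ),
          (if cond (f, g) then (∏ j, Astep p (f j)) * (∏ j, Astep p (g j)) else 0) :=
        ENNReal.tsum_prod'
    _ ≤ ∑' f : Fin M → (Fin 3 → ℤ), (∏ j, Astep p (f j)) * ((2 * R + 1 : ℕ) * Bpt) := by
        apply ENNReal.tsum_le_tsum
        intro f
        set lo : ℤ := ∑ j, f j 0 - v 0 - R with hlo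
        set hi : ℤ := ∑ j, f j 0 - v 0 + R with hhi
        have hkey : ∀ g : Fin M → (Fin 3 → ℤ), cond (f, g) → (∑ j, g j 0) ∈ Finset.Icc lo hi := by
          intro g hcfg
          rw [hcond] at hcfg
          set u : (Fin 3 → ℤ) := v + ∑ j : Fin M, (g j - f j) with hu
          have h1 : (l1n3 u : ℝ) ≤ (R : ℝ) := le_trans hcfg hRB
          have h2 : l1n3 u ≤ R := by exact_mod_cast h1
          have h3 : (u 0).natAbs ≤ l1n3 u := Finset.single_le_sum
            (f := fun i => (u i).natAbs) (fun _ _ => Nat.zero_le _) (Finset.mem_univ 0)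
          have h4 : u 0 = v 0 + (∑ j, g j 0 - ∑ j, f j 0) := by
            rw [hu]
            have : (v + ∑ j : Fin M, (g j - f j)) 0 = v 0 + (∑ j : Fin M, (g j - f j)) 0 := rfl
            rw [this, Finset.sum_apply]
            rw [show ∑ j : Fin M, (g j - f j) 0 = ∑ j : Fin M, (g j 0 - f j 0) from rfl,
              Finset.sum_sub_distrib]
          rw [Finset.mem_Icc, hlo, hhi]
          omega
        calc (∑' g : Fin M → (Fin 3 → ℤ),
              if cond (f, g) then (∏ j, Astep p (f j)) * (∏ j, Astep p (g j)) else 0)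
            ≤ ∑' g : Fin M → (Fin 3 → ℤ), (∏ j, Astep p (f j)) *
                (if (∑ j, g j 0) ∈ Finset.Icc lo hi then (∏ j, Astep p (g j)) else 0) := by
              apply ENNReal.tsum_le_tsum
              intro g
              by_cases h : cond (f, g)
              · rw [if_pos h, if_pos (hkey g h)]
              · rw [if_neg h]
                exact zero_le
          _ = (∏ j, Astep p (f j)) * ∑' g : Fin M → (Fin 3 → ℤ),
                (if (∑ j, g j 0) ∈ Finset.Icc lo hi then (∏ j, Astep p (g j)) else 0) :=
              ENNReal.tsum_mul_left
          _ ≤ (∏ j, Astep p (f j)) * ((2 * R + 1 : ℕ) * Bpt) := by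
              apply mul_le_mul_right
              have hpoint : ∀ g : Fin M → (Fin 3 → ℤ),
                  (if (∑ j, g j 0) ∈ Finset.Icc lo hi then (∏ j, Astep p (g j)) else 0) =
                  ∑ c ∈ Finset.Icc lo hi,
                    (if (∑ j, g j 0) = c then (∏ j, Astep p (g j)) else 0) := by
                intro g
                exact (Finset.sum_ite_eq (Finset.Icc lo hi) (∑ j, g j 0)
                  (fun _ => ∏ j, Astep p (g j))).symm
              calc (∑' g : Fin M → (Fin 3 → ℤ),
                    if (∑ j, g j 0) ∈ Finset.Icc lo hi then (∏ j, Astep p (g j)) else 0)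
                  = ∑' g : Fin M → (Fin 3 → ℤ), ∑ c ∈ Finset.Icc lo hi,
                      (if (∑ j, g j 0) = c then (∏ j, Astep p (g j)) else 0) := by
                    congr 1; funext g; exact hpoint g
                _ = ∑ c ∈ Finset.Icc lo hi, ∑' g : Fin M → (Fin 3 → ℤ),
                      (if (∑ j, g j 0) = c then (∏ j, Astep p (g j)) else 0) :=
                    Summable.tsum_finsetSum (fun _ _ => ENNReal.summable)
                _ = ∑ c ∈ Finset.Icc lo hi, (bstep p ^ M) c := by
                    apply Finset.sum_congr rfl
                    intro c _
                    exact dstep_eq p M c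
                _ ≤ (Finset.Icc lo hi).card • Bpt :=
                    Finset.sum_le_card_nsmul _ _ _ (fun c _ => hpt c)
                _ = (2 * R + 1 : ℕ) * Bpt := by
                    have hcount : (Finset.Icc lo hi).card = 2 * R + 1 := by
                      rw [Int.card_Icc, hlo, hhi]
                      omega
                    rw [hcount, nsmul_eq_mul]
    _ ≤ 1 * ((2 * R + 1 : ℕ) * Bpt) := by
        rw [ENNReal.tsum_mul_right]
        apply mul_le_mul_left
        rw [tsum_prod_Astep]
        apply pow_le_one₀ (zero_le)
        exact tsum_pstep3_le_one hp0 hp1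
    _ = (2 * R + 1 : ℕ) * Bpt := one_mul _


noncomputable def rho (p : ℝ) : ℝ := (2 : ℝ) ^ (qreal p) * (1 - qreal p)

lemma rho_nonneg (hp0 : 0 < p) (hp1 : p < 1) : 0 ≤ rho p := by
  have h1 : qreal p < 1 / 6 := qreal_lt hp0 hp1
  have h2 : (0:ℝ) < (2 : ℝ) ^ (qreal p) := Real.rpow_pos_of_pos (by norm_num) _
  have h3 : (0:ℝ) ≤ 1 - qreal p := by linarith
  rw [rho]
  exact mul_nonneg h2.le h3

lemma rho_lt_one (hp0 : 0 < p) (hp1 : p < 1) : rho p < 1 := by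
  set q := qreal p with hq
  have hq0 : 0 < q := qreal_pos hp0 hp1
  have hq1 : q < 1 / 6 := qreal_lt hp0 hp1
  set L := Real.log 2 with hL
  have hL1 : L < 1 := by
    rw [hL]
    calc Real.log 2 < 0.6931471808 := Real.log_two_lt_d9
      _ < 1 := by norm_num
  have hL0 : 0 < L := Real.log_pos (by norm_num)
  have hexp : (2 : ℝ) ^ q = Real.exp (L * q) := by
    rw [Real.rpow_def_of_pos (by norm_num), hL]
  have h1 : 1 - L * q ≤ Real.exp (-(L * q)) := by
    have := Real.add_one_le_exp (-(L * q))
    linarith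
  have hkey : Real.exp (L * q) * (1 - L * q) ≤ 1 := by
    have hmul := mul_le_mul_of_nonneg_left h1 (le_of_lt (Real.exp_pos (L * q)))
    rw [← Real.exp_add] at hmul
    simp only [add_neg_cancel, Real.exp_zero] at hmul
    linarith
  have hlt : 1 - q < 1 - L * q := by nlinarith
  calc rho p = Real.exp (L * q) * (1 - q) := by rw [rho, hexp]
    _ < Real.exp (L * q) * (1 - L * q) :=
        mul_lt_mul_of_pos_left hlt (Real.exp_pos _)
    _ ≤ 1 := hkey

lemma chernoff_real (hp0 : 0 < p) (hp1 : p < 1) (m t : ℕ) (ht : (t : ℝ) ≤ qreal p * m) :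
    (2 : ℝ) ^ t * (1 - qreal p) ^ m ≤ (rho p) ^ m := by
  set q := qreal p with hq
  have hq0 : 0 < q := qreal_pos hp0 hp1
  have hq1 : q < 1 / 6 := qreal_lt hp0 hp1
  have h1 : (2 : ℝ) ^ t = (2 : ℝ) ^ (t : ℝ) := (Real.rpow_natCast 2 t).symm
  have h2 : (2 : ℝ) ^ (t : ℝ) ≤ (2 : ℝ) ^ (q * m) :=
    Real.rpow_le_rpow_of_exponent_le (by norm_num) ht
  have h3 : (2 : ℝ) ^ (q * (m : ℝ)) = ((2 : ℝ) ^ q) ^ m := by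
    rw [Real.rpow_mul (by norm_num), Real.rpow_natCast]
  have h4 : (0:ℝ) ≤ (1 - q) ^ m := by
    apply pow_nonneg; linarith
  calc (2 : ℝ) ^ t * (1 - q) ^ m ≤ (2 : ℝ) ^ (q * m) * (1 - q) ^ m := by
        rw [h1]; exact mul_le_mul_of_nonneg_right h2 h4
    _ = ((2 : ℝ) ^ q) ^ m * (1 - q) ^ m := by rw [h3]
    _ = (rho p) ^ m := by rw [rho, mul_pow]

lemma rho_pow_eventually (hp0 : 0 < p) (hp1 : p < 1) :
    ∃ N : ℕ, ∀ n : ℕ, N ≤ n → 1 ≤ n → (rho p) ^ (n ^ 4) ≤ 1 / (n : ℝ) ^ 2 := by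
  have htend := tendsto_pow_const_mul_const_pow_of_lt_one 2 (rho_nonneg hp0 hp1)
    (rho_lt_one hp0 hp1)
  have hev : ∀ᶠ n : ℕ in Filter.atTop, (n : ℝ) ^ 2 * (rho p) ^ n < 1 :=
    htend.eventually_lt_const one_pos
  obtain ⟨N, hN⟩ := Filter.eventually_atTop.1 hev
  refine ⟨N, fun n hn hn1 => ?_⟩
  have h1 : (rho p) ^ (n ^ 4) ≤ (rho p) ^ n := by
    apply pow_le_pow_of_le_one (rho_nonneg hp0 hp1) (le_of_lt (rho_lt_one hp0 hp1))
    calc n = n ^ 1 := (pow_one n).symm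
      _ ≤ n ^ 4 := Nat.pow_le_pow_right (by omega) (by omega)
  have h2 : (n : ℝ) ^ 2 * (rho p) ^ n < 1 := hN n hn
  have h3 : (0:ℝ) < (n : ℝ) ^ 2 := by
    have : (1:ℝ) ≤ (n : ℝ) := by exact_mod_cast hn1
    positivity
  refine h1.trans ?_
  rw [le_div_iff₀ h3]
  nlinarith [h2]


/-- Fix `0 < p < 1` and `0 < ε < 1/3`.  Let `X₁, X₂, …` and
`Y₁, Y₂, …` be two independent collections of i.i.d. `ℤ³`-valued random variables,
each with the step distribution `pstep3 p`.  For `v ∈ ℤ³` let `G_{n,ε}(v)` be the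
event that `‖v + Σ_{j≤n⁴} (Y_j - X_j)‖₁ ≤ n^{2(1-ε)}`.  Then there are `α > 0` and
`C₆ > 0` such that for all sufficiently large `n`, `P (G_{n,ε}(v)) < C₆ n^{-α}` for
every `v` with `n^{1-ε} < ‖v‖₁ ≤ n^{1+ε}`. -/
theorem random_walks_inner_annulus_bound (p : ℝ) (hp0 : 0 < p) (hp1 : p < 1)
    (ε : ℝ) (hε0 : 0 < ε) (hε1 : ε < 1 / 3)
    {Ω : Type} [MeasurableSpace Ω] (P : Measure Ω) [IsProbabilityMeasure P]
    (X Y : ℕ → Ω → (Fin 3 → ℤ))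
    (hindep : iIndepFun (Sum.elim X Y) P)
    (hX : ∀ i w, P {ω | X i ω = w} = ENNReal.ofReal (pstep3 p w))
    (hY : ∀ i w, P {ω | Y i ω = w} = ENNReal.ofReal (pstep3 p w)) :
    ∃ α : ℝ, 0 < α ∧ ∃ C₆ : ℝ, 0 < C₆ ∧ ∃ N : ℕ, ∀ n : ℕ, N ≤ n →
      ∀ v : Fin 3 → ℤ,
        (n : ℝ) ^ (1 - ε) < (l1n3 v : ℝ) → (l1n3 v : ℝ) ≤ (n : ℝ) ^ (1 + ε) →
        P {ω | (l1n3 (v + ∑ j ∈ Finset.range (n ^ 4), (Y j ω - X j ω)) : ℝ) ≤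
            (n : ℝ) ^ (2 * (1 - ε))} <
          ENNReal.ofReal (C₆ * (n : ℝ) ^ (-α)) := by
  obtain ⟨N2, hN2⟩ := rho_pow_eventually hp0 hp1
  have hq0 : 0 < qreal p := qreal_pos hp0 hp1
  have hq1 : qreal p < 1 / 6 := qreal_lt hp0 hp1
  set q := qreal p with hqdef
  set C₀ : ℝ := Real.sqrt 2 / Real.sqrt q + 1 with hC₀
  have hC₀pos : 0 < C₀ := by positivity
  refine ⟨2 * ε, by linarith, 5 * C₀ + 1, by positivity, max N2 1, ?_⟩
  intro n hn v _ _
  have hn1 : 1 ≤ n := le_trans (le_max_right _ _) hn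
  have hnN2 : N2 ≤ n := le_trans (le_max_left _ _) hn
  have hnR : (1:ℝ) ≤ (n:ℝ) := by exact_mod_cast hn1
  have hnpos : (0:ℝ) < (n:ℝ) := by linarith
  have hn2 : (0:ℝ) < (n:ℝ) ^ 2 := by positivity
  set M : ℕ := n ^ 4 with hM
  set Brad : ℝ := (n:ℝ) ^ (2 * (1 - ε)) with hBrad
  have hBrad1 : (1:ℝ) ≤ Brad := by
    calc (1:ℝ) = (n:ℝ) ^ (0:ℝ) := (Real.rpow_zero _).symm
      _ ≤ Brad := Real.rpow_le_rpow_of_exponent_le hnR (by linarith)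
  have hBradnn : (0:ℝ) ≤ Brad := by linarith
  set R : ℕ := ⌈Brad⌉₊ with hR
  have hRB : Brad ≤ (R : ℝ) := Nat.le_ceil _
  set t : ℕ := ⌊q * (M:ℝ)⌋₊ with ht
  have hMc : ((M:ℕ):ℝ) = (n:ℝ) ^ 4 := by rw [hM]; push_cast; ring
  have htM : t ≤ M := by
    have h1 : q * (M:ℝ) ≤ ((M:ℕ):ℝ) := by nlinarith [Nat.cast_nonneg (α := ℝ) M]
    calc t ≤ ⌊((M:ℕ):ℝ)⌋₊ := Nat.floor_mono h1
      _ = M := Nat.floor_natCast M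
  set Bpt : ℝ≥0∞ := ENNReal.ofReal (Real.sqrt 2 / Real.sqrt (t + 1)) +
    2 ^ t * ENNReal.ofReal (1 - q) ^ M with hBpt
  have hpt : ∀ c : ℤ, (bstep p ^ M) c ≤ Bpt := fun c => bstep_pow_apply_le hp0 hp1 M t htM c
  have hmain := event_prob_le p hp0 hp1 P X Y hindep hX hY M R v Brad hRB Bpt hpt
  -- part 1 : the sqrt term
  have ht1 : q * (n:ℝ) ^ 4 ≤ (t:ℝ) + 1 := by
    have h := (Nat.lt_floor_add_one (q * (M:ℝ))).le
    rw [← ht, hMc] at h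
    exact h
  have hsq : Real.sqrt q * (n:ℝ) ^ 2 ≤ Real.sqrt ((t:ℝ) + 1) := by
    have h4 : Real.sqrt (q * (n:ℝ) ^ 4) = Real.sqrt q * (n:ℝ) ^ 2 := by
      rw [Real.sqrt_mul hq0.le, show ((n:ℝ) ^ 4) = ((n:ℝ) ^ 2) ^ 2 by ring,
        Real.sqrt_sq hn2.le]
    rw [← h4]
    exact Real.sqrt_le_sqrt ht1
  have hpart1 : Real.sqrt 2 / Real.sqrt ((t:ℝ) + 1) ≤
      (Real.sqrt 2 / Real.sqrt q) * (1 / (n:ℝ) ^ 2) := by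
    have hd : (0:ℝ) < Real.sqrt q * (n:ℝ) ^ 2 := by positivity
    calc Real.sqrt 2 / Real.sqrt ((t:ℝ) + 1) ≤ Real.sqrt 2 / (Real.sqrt q * (n:ℝ) ^ 2) := by
          gcongr
      _ = (Real.sqrt 2 / Real.sqrt q) * (1 / (n:ℝ) ^ 2) := by ring
  -- part 2 : the Chernoff term
  have hpart2 : (2:ℝ≥0∞) ^ t * ENNReal.ofReal (1 - q) ^ M ≤ ENNReal.ofReal (1 / (n:ℝ) ^ 2) := by
    have he : (2:ℝ≥0∞) ^ t * ENNReal.ofReal (1 - q) ^ M =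
        ENNReal.ofReal ((2:ℝ) ^ t * (1 - q) ^ M) := by
      rw [ENNReal.ofReal_mul (by positivity), ENNReal.ofReal_pow (by norm_num : (0:ℝ) ≤ 2),
        ENNReal.ofReal_pow (by linarith : (0:ℝ) ≤ 1 - q), ENNReal.ofReal_ofNat]
    rw [he]
    apply ENNReal.ofReal_le_ofReal
    have hfle : (t:ℝ) ≤ q * (M:ℝ) := Nat.floor_le (by positivity)
    have hcher := chernoff_real hp0 hp1 M t hfle
    refine hcher.trans ?_
    exact hN2 n hnN2 hn1
  have hBpt_le : Bpt ≤ ENNReal.ofReal (C₀ * (1 / (n:ℝ) ^ 2)) := by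
    calc Bpt ≤ ENNReal.ofReal ((Real.sqrt 2 / Real.sqrt q) * (1 / (n:ℝ) ^ 2)) +
        ENNReal.ofReal (1 / (n:ℝ) ^ 2) :=
          add_le_add (ENNReal.ofReal_le_ofReal hpart1) hpart2
      _ = ENNReal.ofReal ((Real.sqrt 2 / Real.sqrt q) * (1 / (n:ℝ) ^ 2) + 1 / (n:ℝ) ^ 2) :=
          (ENNReal.ofReal_add (by positivity) (by positivity)).symm
      _ = ENNReal.ofReal (C₀ * (1 / (n:ℝ) ^ 2)) := by
          rw [hC₀]; ring_nf
  have hcard : ((2 * R + 1 : ℕ) : ℝ≥0∞) ≤ ENNReal.ofReal (5 * Brad) := by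
    rw [← ENNReal.ofReal_natCast]
    apply ENNReal.ofReal_le_ofReal
    have hceil : (R:ℝ) < Brad + 1 := Nat.ceil_lt_add_one hBradnn
    push_cast
    linarith
  have hexpo : Brad * (1 / (n:ℝ) ^ 2) = (n:ℝ) ^ (-(2 * ε)) := by
    have h2 : (1:ℝ) / (n:ℝ) ^ 2 = (n:ℝ) ^ (-(2:ℝ)) := by
      rw [Real.rpow_neg hnpos.le, show ((2:ℝ)) = ((2:ℕ):ℝ) by norm_num,
        Real.rpow_natCast, one_div]
    rw [hBrad, h2, ← Real.rpow_add hnpos]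
    congr 1
    ring
  calc P {ω | (l1n3 (v + ∑ j ∈ Finset.range M, (Y j ω - X j ω)) : ℝ) ≤ Brad}
      ≤ ((2 * R + 1 : ℕ) : ℝ≥0∞) * Bpt := hmain
    _ ≤ ENNReal.ofReal (5 * Brad) * ENNReal.ofReal (C₀ * (1 / (n:ℝ) ^ 2)) :=
        mul_le_mul' hcard hBpt_le
    _ = ENNReal.ofReal (5 * C₀ * (Brad * (1 / (n:ℝ) ^ 2))) := by
        rw [← ENNReal.ofReal_mul (by positivity)]
        congr 1
        ring
    _ = ENNReal.ofReal (5 * C₀ * (n:ℝ) ^ (-(2 * ε))) := by rw [hexpo]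
    _ < ENNReal.ofReal ((5 * C₀ + 1) * (n:ℝ) ^ (-(2 * ε))) := by
        rw [ENNReal.ofReal_lt_ofReal_iff (by positivity)]
        have hrp : (0:ℝ) < (n:ℝ) ^ (-(2 * ε)) := Real.rpow_pos_of_pos hnpos _
        nlinarith
end
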